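/- arXiv:math/9905124 — 9 statements merged into one kernel-verified Lean document; each statement's English description precedes it below -/
import Mathlib

section
/- If F is a nonprincipal filter on ω (identified with a subset of 2^ω via characteristic functions) that is measurable with respect to a product measure μ_p̂ on 2^ω determined by a sequence p̂ = (p_n) with p_n ∈ (0,1/2], then μ_p̂(F) = 0. In other words, a measurable nonprincipal filter must be null. -/
open MeasureTheory Filter Set
open scoped ENNReal

/-- `μ` is the product (Bernoulli) measure on `Bool^ι` determined by the sequence `p`:
a probability measure giving each cylinder set its natural product value. -/
def IsBernoulli {ι : Type*} (μ : Measure (ι → Bool)) (p : ι → ℝ≥0∞) : Prop :=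
  IsProbabilityMeasure μ ∧
    ∀ (s : Finset ι) (f : ι → Bool),
      μ {x | ∀ i ∈ s, x i = f i} = ∏ i ∈ s, (if f i then p i else 1 - p i)

/-- The subset of `2^ω` corresponding to a filter on `ω`, via characteristic functions. -/
def filterSet (F : Filter ℕ) : Set (ℕ → Bool) := {x | {n | x n = true} ∈ F}

/-!
Fix a finite set `s` of coordinates. Since `p n ≤ 1/2`, `μ` can be coupled with itself: there
are `μ`-distributed `X`, `Y` that agree on `s` and are never both `1` off `s`. If both lay in a
measurable `C ⊆ filterSet F`, the sets they code would be in `F` while meeting only inside the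
finite set `s`; so almost surely they do not. As `X ∈ A ↔ Y ∈ A` for a cylinder `A` over `s`,
this gives `2 μ (C ∩ A) ≤ μ A`. Approximating `C` by cylinders yields `2 μ C ≤ μ C`.
-/

open scoped symmDiff

theorem IsBernoulli.unique {ι : Type*} {μ ν : Measure (ι → Bool)} {p : ι → ℝ≥0∞}
    (hμ : IsBernoulli μ p) (hν : IsBernoulli ν p) : μ = ν := by
  have := hμ.1
  refine IsProjectiveLimit.unique (P := fun I ↦ μ.map I.restrict) (fun _ ↦ rfl) fun I ↦ ?_
  classical
  refine Measure.ext_iff_singleton.2 fun f ↦ ?_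
  have hpre : I.restrict ⁻¹' ({f} : Set (I → Bool)) =
      {x | ∀ i ∈ I, x i = if h : i ∈ I then f ⟨i, h⟩ else false} := by
    ext x
    simp +contextual [funext_iff]
  rw [Measure.map_apply (Finset.measurable_restrict I) (measurableSet_singleton f),
    Measure.map_apply (Finset.measurable_restrict I) (measurableSet_singleton f), hpre, hμ.2, hν.2]

noncomputable def diagCoupling (q : ℝ≥0∞) : Measure (Bool × Bool) :=
  q • .dirac (true, true) + (1 - q) • .dirac (false, false)

noncomputable def disjCoupling (q : ℝ≥0∞) : Measure (Bool × Bool) :=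
  q • .dirac (true, false) + q • .dirac (false, true) + (1 - q - q) • .dirac (false, false)

section Coupling

variable {q : ℝ≥0∞}

lemma isProbabilityMeasure_diagCoupling (hq : q ≤ 1) : IsProbabilityMeasure (diagCoupling q) :=
  ⟨by simp [diagCoupling, add_tsub_cancel_of_le hq]⟩

lemma isProbabilityMeasure_disjCoupling (hq : q ≤ 1 - q) :
    IsProbabilityMeasure (disjCoupling q) :=
  ⟨by simp [disjCoupling, add_assoc, add_tsub_cancel_of_le hq,
    add_tsub_cancel_of_le (hq.trans tsub_le_self)]⟩

lemma diagCoupling_fst (b : Bool) :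
    diagCoupling q (Prod.fst ⁻¹' {b}) = if b then q else 1 - q := by
  cases b <;> simp [diagCoupling]

lemma diagCoupling_snd (b : Bool) :
    diagCoupling q (Prod.snd ⁻¹' {b}) = if b then q else 1 - q := by
  cases b <;> simp [diagCoupling]

lemma disjCoupling_fst (hq : q ≤ 1 - q) (b : Bool) :
    disjCoupling q (Prod.fst ⁻¹' {b}) = if b then q else 1 - q := by
  cases b <;> simp [disjCoupling, add_tsub_cancel_of_le hq]

lemma disjCoupling_snd (hq : q ≤ 1 - q) (b : Bool) :
    disjCoupling q (Prod.snd ⁻¹' {b}) = if b then q else 1 - q := by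
  cases b <;> simp [disjCoupling, add_tsub_cancel_of_le hq]

lemma ae_diagCoupling : ∀ᵐ v ∂diagCoupling q, v.1 = v.2 := by
  simp [diagCoupling, ae_iff]

lemma ae_disjCoupling : ∀ᵐ v ∂disjCoupling q, ¬(v.1 = true ∧ v.2 = true) := by
  simp [disjCoupling, ae_iff]

end Coupling

section InfinitePi

open Measure

variable {ι : Type*} {α : ι → Type*} [∀ i, MeasurableSpace (α i)] {ν : ∀ i, Measure (α i)}
  [∀ i, IsProbabilityMeasure (ν i)]

lemma isBernoulli_map_infinitePi {p : ι → ℝ≥0∞} {g : ∀ i, α i → Bool}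
    (hg : ∀ i, Measurable (g i)) (hν : ∀ i b, ν i (g i ⁻¹' {b}) = if b then p i else 1 - p i) :
    IsBernoulli ((infinitePi ν).map fun ω i ↦ g i (ω i)) p := by
  have hmeas : Measurable fun (ω : ∀ i, α i) i ↦ g i (ω i) := by fun_prop
  refine ⟨isProbabilityMeasure_map hmeas.aemeasurable, fun s f ↦ ?_⟩
  have hpre : (fun (ω : ∀ i, α i) i ↦ g i (ω i)) ⁻¹' {x | ∀ i ∈ s, x i = f i} =
      (s : Set ι).pi fun i ↦ g i ⁻¹' {f i} := by
    ext ω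
    simp
  rw [Measure.map_apply hmeas, hpre, infinitePi_pi _ fun i _ ↦ hg i (measurableSet_singleton _)]
  · exact Finset.prod_congr rfl fun i _ ↦ hν i (f i)
  exact .pi (t := fun i ↦ {f i}) s.countable_toSet fun i _ ↦ measurableSet_singleton (f i)

lemma ae_infinitePi_forall [Countable ι] {r : ∀ i, α i → Prop} (h : ∀ i, ∀ᵐ x ∂ν i, r i x) :
    ∀ᵐ ω ∂infinitePi ν, ∀ i, r i (ω i) :=
  ae_all_iff.2 fun i ↦ (measurePreserving_eval_infinitePi ν i).quasiMeasurePreserving.ae (h i)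

end InfinitePi

open Measure in
theorem exists_coupling_of_isBernoulli {ι : Type*} [Countable ι] {μ : Measure (ι → Bool)}
    {p : ι → ℝ≥0∞} (hμ : IsBernoulli μ p) (hp : ∀ i, p i ≤ 1 / 2) (s : Finset ι) :
    ∃ P : Measure (ι → Bool × Bool), P.map (fun ω i ↦ (ω i).1) = μ ∧
      P.map (fun ω i ↦ (ω i).2) = μ ∧ (∀ᵐ ω ∂P, ∀ i ∈ s, (ω i).1 = (ω i).2) ∧
      ∀ᵐ ω ∂P, {i | (ω i).1 = true} ∩ {i | (ω i).2 = true} ⊆ s := by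
  have hp' (i : ι) : p i ≤ 1 - p i :=
    (hp i).trans <| (ENNReal.sub_half ENNReal.one_ne_top).symm.le.trans (tsub_le_tsub_left (hp i) 1)
  classical
  let ν (i : ι) := if i ∈ s then diagCoupling (p i) else disjCoupling (p i)
  have (i : ι) : IsProbabilityMeasure (ν i) := by
    by_cases hi : i ∈ s
    · simpa [ν, hi] using isProbabilityMeasure_diagCoupling ((hp' i).trans tsub_le_self)
    · simpa [ν, hi] using isProbabilityMeasure_disjCoupling (hp' i)
  refine ⟨infinitePi ν, IsBernoulli.unique (isBernoulli_map_infinitePi (fun _ ↦ measurable_fst)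
    fun i b ↦ ?_) hμ, IsBernoulli.unique (isBernoulli_map_infinitePi (fun _ ↦ measurable_snd)
    fun i b ↦ ?_) hμ, ?_⟩
  · by_cases hi : i ∈ s
    · simpa [ν, hi] using diagCoupling_fst b
    · simpa [ν, hi] using disjCoupling_fst (hp' i) b
  · by_cases hi : i ∈ s
    · simpa [ν, hi] using diagCoupling_snd b
    · simpa [ν, hi] using disjCoupling_snd (hp' i) b
  have hν : ∀ᵐ ω ∂infinitePi ν, ∀ i, (i ∈ s → (ω i).1 = (ω i).2) ∧
      (i ∉ s → ¬((ω i).1 = true ∧ (ω i).2 = true)) := by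
    refine ae_infinitePi_forall (r := fun i (v : Bool × Bool) ↦ (i ∈ s → v.1 = v.2) ∧
      (i ∉ s → ¬(v.1 = true ∧ v.2 = true))) fun i ↦ ?_
    by_cases hi : i ∈ s
    · simpa [ν, hi] using ae_diagCoupling
    · simpa [ν, hi] using ae_disjCoupling
  refine ⟨hν.mono fun ω h i hi ↦ (h i).1 hi, hν.mono fun ω h i hi ↦ ?_⟩
  by_contra his
  exact (h i).2 his hi
theorem measure_inter_cylinder_add_self_le {Ω : Type*} [MeasurableSpace Ω] {P : Measure Ω}
    {μ : Measure (ℕ → Bool)} {X Y : Ω → ℕ → Bool} (hX : Measurable X) (hY : Measurable Y)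
    (hXμ : P.map X = μ) (hYμ : P.map Y = μ) {s : Finset ℕ}
    (hagree : ∀ᵐ ω ∂P, ∀ i ∈ s, X ω i = Y ω i)
    (hdisj : ∀ᵐ ω ∂P, {i | X ω i = true} ∩ {i | Y ω i = true} ⊆ s)
    {F : Filter ℕ} [F.NeBot] (hF : F ≤ cofinite) {C : Set (ℕ → Bool)} (hC : MeasurableSet C)
    (hCF : C ⊆ filterSet F) {S : Set (s → Bool)} (hS : MeasurableSet S) :
    μ (C ∩ cylinder s S) + μ (C ∩ cylinder s S) ≤ μ (cylinder s S) := by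
  set A : Set (ℕ → Bool) := cylinder s S
  have hA : MeasurableSet A := hS.cylinder
  have hXY : Y ⁻¹' A ≤ᵐ[P] X ⁻¹' A := hagree.mono fun ω h hY ↦ by
    have : s.restrict (X ω) = s.restrict (Y ω) := funext fun i ↦ h i i.2
    show s.restrict (X ω) ∈ S
    rwa [this]
  have hnull : P (X ⁻¹' (C ∩ A) ∩ Y ⁻¹' (C ∩ A)) = 0 := by
    refine measure_eq_zero_iff_ae_notMem.2 (hdisj.mono fun ω h hω ↦ ?_)
    have hmem : {i | X ω i = true} ∩ {i | Y ω i = true} ∈ F :=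
      inter_mem (hCF hω.1.1) (hCF hω.2.1)
    exact frequently_cofinite_mem_iff_infinite.1 ((Eventually.frequently hmem).filter_mono hF)
      (s.finite_toSet.subset h)
  calc μ (C ∩ A) + μ (C ∩ A) = P (X ⁻¹' (C ∩ A)) + P (Y ⁻¹' (C ∩ A)) := by
        rw [← Measure.map_apply hX (hC.inter hA), ← Measure.map_apply hY (hC.inter hA), hXμ, hYμ]
    _ = P (X ⁻¹' (C ∩ A) ∪ Y ⁻¹' (C ∩ A)) := by
        rw [← measure_union_add_inter _ (hY (hC.inter hA)), hnull, add_zero]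
    _ ≤ P (X ⁻¹' A) := measure_mono_ae <| hXY.mono fun ω h hω ↦
        hω.elim (fun hX ↦ hX.2) fun hY ↦ h hY.2
    _ = μ A := by rw [← hXμ, Measure.map_apply hX hA]

lemma measure_eq_zero_of_forall_approx {α : Type*} [MeasurableSpace α] {μ : Measure α}
    [IsFiniteMeasure μ] {C : Set α}
    (h : ∀ ε, 0 < ε → ∃ A, μ (A ∆ C) < ε ∧ μ (C ∩ A) + μ (C ∩ A) ≤ μ A) : μ C = 0 := by
  by_contra h0
  obtain ⟨A, hAC, hA⟩ := h (μ C / 3) (ENNReal.div_pos h0 (by norm_num))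
  set δ := μ (A ∆ C)
  have hC : μ C ≤ μ (C ∩ A) + δ := (measure_mono fun x hx ↦ by
    by_cases hxA : x ∈ A
    exacts [Or.inl ⟨hx, hxA⟩, Or.inr (Or.inr ⟨hx, hxA⟩)]).trans (measure_union_le _ _)
  have hA' : μ A ≤ μ (C ∩ A) + δ := (measure_mono fun x hx ↦ by
    by_cases hxC : x ∈ C
    exacts [Or.inl ⟨hxC, hx⟩, Or.inr (Or.inl ⟨hx, hxC⟩)]).trans (measure_union_le _ _)
  have hδ : 3 * δ < μ C := by
    rwa [mul_comm, ← ENNReal.lt_div_iff_mul_lt (by norm_num) (by norm_num)]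
  have : μ C + μ C < μ C + μ C := calc
    μ C + μ C ≤ (μ (C ∩ A) + μ (C ∩ A)) + (δ + δ) := by
        rw [add_add_add_comm]; exact add_le_add hC hC
    _ ≤ μ (C ∩ A) + 3 * δ := by
        calc _ ≤ μ (C ∩ A) + δ + (δ + δ) := add_le_add (hA.trans hA') le_rfl
          _ = _ := by ring
    _ ≤ μ C + 3 * δ := by gcongr; exact inter_subset_left
    _ < μ C + μ C := ENNReal.add_lt_add_left (measure_ne_top μ C) hδ
  exact lt_irrefl _ this

lemma measure_eq_zero_of_forall_cylinder {ι : Type*} {α : ι → Type*}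
    [∀ i, MeasurableSpace (α i)] {μ : Measure (∀ i, α i)} [IsFiniteMeasure μ] {C : Set (∀ i, α i)}
    (hC : MeasurableSet C) (h : ∀ (s : Finset ι) (S : Set (∀ i : s, α i)), MeasurableSet S →
      μ (C ∩ cylinder s S) + μ (C ∩ cylinder s S) ≤ μ (cylinder s S)) :
    μ C = 0 := by
  refine measure_eq_zero_of_forall_approx fun ε hε ↦ ?_
  obtain ⟨A, hA, hAC⟩ := exists_measure_symmDiff_lt_of_generateFrom_isSetRing (μ := μ)
    isSetRing_measurableCylinders ⟨{univ}, countable_singleton _,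
      singleton_subset_iff.2 (univ_mem_measurableCylinders α), by simp⟩
    generateFrom_measurableCylinders.symm hC hε
  obtain ⟨s, S, hS, rfl⟩ := (mem_measurableCylinders A).1 hA
  exact ⟨_, hAC, h s S hS⟩

theorem measurable_filter_is_null (μ : Measure (ℕ → Bool)) (p : ℕ → ℝ≥0∞)
    (hp : ∀ n, 0 < p n ∧ p n ≤ 1 / 2) (hμ : IsBernoulli μ p)
    (F : Filter ℕ) [F.NeBot] (hF : F ≤ Filter.cofinite)
    (hmeas : NullMeasurableSet (filterSet F) μ) :
    μ (filterSet F) = 0 := by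
  have := hμ.1
  obtain ⟨C, hCF, hC, hCae⟩ := hmeas.exists_measurable_subset_ae_eq
  rw [← measure_congr hCae]
  refine measure_eq_zero_of_forall_cylinder hC fun s S hS ↦ ?_
  obtain ⟨P, hXμ, hYμ, hagree, hdisj⟩ := exists_coupling_of_isBernoulli hμ (fun n ↦ (hp n).2) s
  exact measure_inter_cylinder_add_self_le (by fun_prop) (by fun_prop) hXμ hYμ hagree hdisj hF hC
    hCF hS
end

section
/- A nonprincipal filter on ω either is meager as a subset of 2^ω or does not have the Baire property. -/
open MeasureTheory Filter Set
open scoped ENNReal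

/-
A filter containing the cofinite sets is invariant under finite changes, so by the topological
zero-one law a Baire measurable one is meagre or comeagre. It cannot be comeagre: flipping all
bits is a homeomorphism of `2^ω` mapping the filter into its dual ideal, and a comeagre set meets
its image under a homeomorphism.
-/

open Topology

theorem Filter.EventuallyEq.isMeagre_diff {X : Type*} [TopologicalSpace X] {s t : Set X}
    (h : s =ᵇ t) : IsMeagre (s \ t) :=
  mem_of_superset h fun _ hx ⟨hs, ht⟩ => ht (hx.mp hs)

theorem not_isMeagre_compl_of_disjoint_preimage {X : Type*} [TopologicalSpace X] [BaireSpace X]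
    [Nonempty X] {A : Set X} (e : X ≃ₜ X) (h : Disjoint A (e ⁻¹' A)) : ¬ IsMeagre Aᶜ := by
  intro hA
  have hcover : (univ : Set X) ⊆ Aᶜ ∪ e ⁻¹' Aᶜ := by
    rw [preimage_compl, ← compl_inter, h.inter_eq, compl_empty]
  exact not_isMeagre_of_isOpen isOpen_univ univ_nonempty
    ((hA.union (hA.preimage_of_isOpenMap e.continuous e.isOpenMap)).mono hcover)

section FlipOn

variable {ι : Type*}

open Classical in
noncomputable def flipOn (s : Set ι) : (ι → Bool) ≃ₜ (ι → Bool) :=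
  Homeomorph.piCongrRight fun i =>
    if i ∈ s then Equiv.boolNot.toHomeomorphOfDiscrete else Homeomorph.refl Bool

theorem flipOn_apply_of_mem {s : Set ι} {i : ι} (hi : i ∈ s) (x : ι → Bool) :
    flipOn s x i = !x i := by
  simp [flipOn, hi, Equiv.toHomeomorphOfDiscrete]

theorem flipOn_apply_of_notMem {s : Set ι} {i : ι} (hi : i ∉ s) (x : ι → Bool) :
    flipOn s x i = x i := by
  simp [flipOn, hi]

theorem flipOn_eventuallyEq {s : Set ι} (hs : s.Finite) (x : ι → Bool) :
    flipOn s x =ᶠ[cofinite] x :=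
  mem_of_superset hs.compl_mem_cofinite fun _ hi => flipOn_apply_of_notMem hi x

theorem exists_flipOn_eqOn (I : Set ι) (x y : ι → Bool) :
    ∃ s ⊆ I, EqOn (flipOn s y) x I := by
  let s := I ∩ {i | y i ≠ x i}
  refine ⟨s, inter_subset_left, fun i hi => ?_⟩
  by_cases hyx : y i = x i
  · rwa [flipOn_apply_of_notMem (s := s) fun h => h.2 hyx]
  · rw [flipOn_apply_of_mem (s := s) ⟨hi, hyx⟩]
    revert hyx; cases y i <;> cases x i <;> simp

theorem BaireMeasurableSet.isMeagre_or_isMeagre_compl_of_cofinite_invariant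
    {A : Set (ι → Bool)} (hA : BaireMeasurableSet A)
    (hinv : ∀ x y, x =ᶠ[cofinite] y → x ∈ A → y ∈ A) : IsMeagre A ∨ IsMeagre Aᶜ := by
  obtain ⟨U, hU, hAU⟩ := hA.residualEq_isOpen
  rcases U.eq_empty_or_nonempty with rfl | ⟨x₀, hx₀⟩
  · exact .inl (by simpa using hAU.isMeagre_diff)
  right
  obtain ⟨I, u, hu, hIU⟩ := isOpen_pi_iff.mp hU x₀ hx₀
  -- `A` misses only a meagre part of `U`, and finitely many flips move every point into `U`.
  have hcover : Aᶜ ⊆ ⋃ s ∈ (I : Set ι).powerset, flipOn s ⁻¹' (U \ A) := by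
    intro y hy
    obtain ⟨s, hsI, hs⟩ := exists_flipOn_eqOn (I : Set ι) x₀ y
    refine mem_biUnion hsI ⟨hIU fun i hi => ?_, fun hsy => hy ?_⟩
    · exact (hs hi).symm ▸ (hu i hi).2
    · exact hinv _ _ (flipOn_eventuallyEq (I.finite_toSet.subset hsI) y) hsy
  refine (isMeagre_biUnion I.finite_toSet.powerset.countable fun s _ => ?_).mono hcover
  exact hAU.symm.isMeagre_diff.preimage_of_isOpenMap (flipOn s).continuous (flipOn s).isOpenMap

end FlipOn

theorem mem_filterSet_of_eventuallyEq {F : Filter ℕ} {x y : ℕ → Bool} (h : x =ᶠ[F] y)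
    (hx : x ∈ filterSet F) : y ∈ filterSet F :=
  show ∀ᶠ n in F, y n = true from
    (h.and (hx : ∀ᶠ n in F, x n = true)).mono fun _ ⟨hn, hxn⟩ => hn ▸ hxn

theorem disjoint_filterSet_preimage_flipOn_univ (F : Filter ℕ) [F.NeBot] :
    Disjoint (filterSet F) (flipOn univ ⁻¹' filterSet F) := by
  refine disjoint_left.mpr fun x hx hflip => F.empty_notMem ?_
  refine mem_of_superset (inter_mem hx hflip) fun n ⟨hxn, hfn⟩ => ?_
  have hnot : (!x n) = true := flipOn_apply_of_mem (mem_univ n) x ▸ hfn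
  simp [show x n = true from hxn] at hnot

theorem filter_meager_or_not_baire (F : Filter ℕ) [F.NeBot] (hF : F ≤ Filter.cofinite) :
    IsMeagre (filterSet F) ∨ ¬ BaireMeasurableSet (filterSet F) := by
  by_cases hB : BaireMeasurableSet (filterSet F)
  · have hinv : ∀ x y, x =ᶠ[cofinite] y → x ∈ filterSet F → y ∈ filterSet F :=
      fun _ _ h => mem_filterSet_of_eventuallyEq (h.filter_mono hF)
    refine .inl <| (hB.isMeagre_or_isMeagre_compl_of_cofinite_invariant hinv).resolve_right ?_
    exact not_isMeagre_compl_of_disjoint_preimage _ (disjoint_filterSet_preimage_flipOn_univ F)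
  · exact .inr hB
end

section
/- Let F be a nonprincipal filter on ω and p̂ = (p_n) a sequence in (0,1/2]. If there exists X ∈ F and k ∈ ω such that Σ_{n∈X} p_n^k < ∞, then μ_p̂(F) = 0. -/
open MeasureTheory Filter Set
open scoped ENNReal

/-!
Take `k` independent copies `ω₁, …, ωₖ` of a `μ_p̂`-random sequence. If all of them lie in `F`,
then so does `X ∩ {n | ω₁ n = … = ωₖ n = true}`, which is therefore infinite because `F` is
nonprincipal. But the event `ω₁ n = … = ωₖ n = true` has probability `p n ^ k`, so by
Borel–Cantelli almost surely it happens for only finitely many `n ∈ X`. Hence the outer measure of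
`filterSet F` satisfies `μ(filterSet F) ^ k = 0`; no measurability of `filterSet F` is needed.
-/

theorem IsBernoulli.measure_coord_true {ι : Type*} {μ : Measure (ι → Bool)} {p : ι → ℝ≥0∞}
    (hμ : IsBernoulli μ p) (i : ι) : μ {x | x i = true} = p i := by
  simpa using hμ.2 {i} fun _ => true

theorem Filter.frequently_cofinite_subtype_of_eventually {α : Type*} {F : Filter α} [F.NeBot]
    (hF : F ≤ cofinite) {X : Set α} (hX : X ∈ F) {P : α → Prop} (hP : ∀ᶠ a in F, P a) :
    ∃ᶠ a : X in cofinite, P a := by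
  rw [← Subtype.val_injective.comap_cofinite_eq, frequently_comap]
  exact ((hP.and hX).frequently.filter_mono hF).mono fun a ⟨hPa, ha⟩ => ⟨⟨a, ha⟩, rfl, hPa⟩

theorem MeasureTheory.measure_eq_zero_of_tsum_pow_ne_top {Ω ι : Type*} [MeasurableSpace Ω]
    [Countable ι] {μ : Measure Ω} [SigmaFinite μ] {A : ι → Set Ω} {k : ℕ}
    (hA : ∑' i, μ (A i) ^ k ≠ ∞)
    {S : Set Ω} (hS : ∀ ω : Fin k → Ω, (∀ j, ω j ∈ S) → ∃ᶠ i in cofinite, ∀ j, ω j ∈ A i) :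
    μ S = 0 := by
  have hk : k ≠ 0 := by
    -- for `k = 0`, `hS` at the empty tuple makes `ι` infinite, so `∑' i, 1` diverges
    rintro rfl
    have : Infinite ι := infinite_univ_iff.1 <| by
      simpa [frequently_cofinite_iff_infinite] using hS Fin.elim0 fun j => j.elim0
    exact hA (by simp)
  set π := Measure.pi fun _ : Fin k => μ
  have hpow (T : Set Ω) : π (univ.pi fun _ => T) = μ T ^ k := by simp [π, Measure.pi_pi]
  have hnull : π (limsup (fun i => univ.pi fun _ => A i) cofinite) = 0 :=
    measure_limsup_cofinite_eq_zero (by simpa only [hpow] using hA)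
  have hsub : univ.pi (fun _ => S) ⊆ limsup (fun i => univ.pi fun _ => A i) cofinite :=
    fun ω hω => by
      simpa [mem_limsup_iff_frequently_mem] using hS ω fun j => hω j (mem_univ j)
  rw [← pow_eq_zero_iff hk, ← hpow]
  exact measure_mono_null hsub hnull

theorem null_of_summable_pow_general (μ : Measure (ℕ → Bool)) (p : ℕ → ℝ≥0∞)
    (hμ : IsBernoulli μ p)
    (F : Filter ℕ) [F.NeBot] (hF : F ≤ Filter.cofinite)
    (hX : ∃ X ∈ F, ∃ k : ℕ, ∑' n : X, p n ^ k ≠ ⊤) :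
    μ (filterSet F) = 0 := by
  have := hμ.1
  obtain ⟨X, hXF, k, hk⟩ := hX
  refine measure_eq_zero_of_tsum_pow_ne_top (A := fun n : X => {x | x n = true}) (k := k)
    (by simpa only [hμ.measure_coord_true] using hk) fun ω hω => ?_
  exact frequently_cofinite_subtype_of_eventually hF hXF (eventually_all.2 hω)

theorem null_of_summable_pow (μ : Measure (ℕ → Bool)) (p : ℕ → ℝ≥0∞)
    (hp : ∀ n, 0 < p n ∧ p n ≤ 1 / 2) (hμ : IsBernoulli μ p)
    (F : Filter ℕ) [F.NeBot] (hF : F ≤ Filter.cofinite)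
    (hX : ∃ X ∈ F, ∃ k : ℕ, ∑' n : X, p n ^ k ≠ ⊤) :
    μ (filterSet F) = 0 :=
  null_of_summable_pow_general μ p hμ F hF hX
end

section
/- Let p̂ = (p_n) be a sequence in (0,1/2] and (k_n) a sequence of natural numbers with Σ p_n^{k_n} = ∞ but Σ p_n^{k_n+1} < ∞. If F is a filter on ω such that Σ_{n∈X} p_n^{k_n} = ∞ for every X ∈ F, then μ_p̂(F) = 0. -/
open MeasureTheory Filter Set
open scoped ENNReal

theorem null_of_divergent_pow (μ : Measure (ℕ → Bool)) (p : ℕ → ℝ≥0∞)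
    (hp : ∀ n, 0 < p n ∧ p n ≤ 1 / 2) (hμ : IsBernoulli μ p)
    (k : ℕ → ℕ) (hk1 : ∑' n, p n ^ k n = ⊤) (hk2 : ∑' n, p n ^ (k n + 1) ≠ ⊤)
    (F : Filter ℕ) [F.NeBot] (hF : F ≤ Filter.cofinite)
    (hFdiv : ∀ X ∈ F, ∑' n : X, p n ^ k n = ⊤) :
    μ (filterSet F) = 0 := by
  set g : ℕ → (ℕ → Bool) → ℝ≥0∞ := fun n x => if x n then p n ^ k n else 0 with hg
  have hgmeas : ∀ n, Measurable (g n) := by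
    intro n
    have hs : MeasurableSet {x : ℕ → Bool | x n = true} := by
      have h0 : {x : ℕ → Bool | x n = true} = (fun x : ℕ → Bool => x n) ⁻¹' {true} := by
        ext; simp
      rw [h0]; exact (measurable_pi_apply n) (MeasurableSet.singleton true)
    exact Measurable.ite hs measurable_const measurable_const
  set f : (ℕ → Bool) → ℝ≥0∞ := fun x => ∑' n, g n x with hf
  have hfmeas : Measurable f := Measurable.ennreal_tsum hgmeas
  -- single coordinate measure
  have hcoord : ∀ n, μ {x : ℕ → Bool | x n = true} = p n := by
    intro n
    have h := hμ.2 {n} (fun _ => true)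
    simpa using h
  -- integral of g n
  have hint : ∀ n, ∫⁻ x, g n x ∂μ = p n ^ (k n + 1) := by
    intro n
    have hmeas : MeasurableSet {x : ℕ → Bool | x n = true} := by
      have h0 : {x : ℕ → Bool | x n = true} = (fun x : ℕ → Bool => x n) ⁻¹' {true} := by
        ext; simp
      rw [h0]; exact (measurable_pi_apply n) (MeasurableSet.singleton true)
    have : g n = Set.indicator {x : ℕ → Bool | x n = true} (fun _ => p n ^ k n) := by
      funext x
      by_cases h : x n = true <;> simp [hg, h, Set.indicator]
    rw [this, lintegral_indicator hmeas _, setLIntegral_const, hcoord, pow_succ]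
  have hfin : ∫⁻ x, f x ∂μ ≠ ⊤ := by
    rw [hf]
    rw [lintegral_tsum fun n => (hgmeas n).aemeasurable]
    simpa [hint] using hk2
  have hae : ∀ᵐ x ∂μ, f x < ⊤ := ae_lt_top hfmeas hfin
  have hnull : μ {x | f x = ⊤} = 0 := by
    have := ae_iff.mp hae
    simpa [lt_top_iff_ne_top] using this
  refine measure_mono_null ?_ hnull
  intro x hx
  have hX : {n | x n = true} ∈ F := hx
  have hdiv := hFdiv _ hX
  simp only [tsum_subtype {n | x n = true} (fun n => p n ^ k n)] at hdiv
  have : f x = ∑' n, Set.indicator {n | x n = true} (fun n => p n ^ k n) n := by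
    exact tsum_congr fun n => by
      by_cases h : x n = true <;> simp [hg, h, Set.indicator, Set.mem_setOf_eq]
  simp only [Set.mem_setOf_eq]
  rw [this, hdiv]
end

section
/- Under the product measure μ_p̂, if (ξ_n) are the random variables on 2^ω defined by ξ_n(X) = p_n^{k_n} if n ∈ X and 0 otherwise, and Σ_n p_n^{k_n+1} < ∞, then the set {X ⊆ ω : Σ_{n∈X} p_n^{k_n} = ∞} has μ_p̂-measure zero. -/
open MeasureTheory Filter Set
open scoped ENNReal

theorem divergence_set_null (μ : Measure (ℕ → Bool)) (p : ℕ → ℝ≥0∞)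
    (hp : ∀ n, 0 < p n ∧ p n ≤ 1 / 2) (hμ : IsBernoulli μ p)
    (k : ℕ → ℕ) (hk : ∑' n, p n ^ (k n + 1) ≠ ⊤) :
    μ {x : ℕ → Bool | ∑' n : {m | x m = true}, p n ^ k n = ⊤} = 0 := by
  set g : (ℕ → Bool) → ℝ≥0∞ := fun x => ∑' n : ℕ,
    Set.indicator {x : ℕ → Bool | x n = true} (fun _ => p n ^ k n) x with hg
  have hsetmeas : ∀ n : ℕ, MeasurableSet {x : ℕ → Bool | x n = true} := by
    intro n
    have : {x : ℕ → Bool | x n = true} = (fun x : ℕ → Bool => x n) ⁻¹' {true} := by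
      ext x; simp
    rw [this]
    exact measurable_pi_apply n trivial
  have hmeasn : ∀ n : ℕ, Measurable fun x : ℕ → Bool =>
      Set.indicator {x : ℕ → Bool | x n = true} (fun _ => p n ^ k n) x := fun n =>
    measurable_const.indicator (hsetmeas n)
  have hμn : ∀ n : ℕ, μ {x : ℕ → Bool | x n = true} = p n := by
    intro n
    have := hμ.2 {n} (fun _ => true)
    simpa using this
  have hint : ∫⁻ x, g x ∂μ ≠ ⊤ := by
    rw [hg, lintegral_tsum (fun n => (hmeasn n).aemeasurable)]
    have : ∀ n : ℕ, (∫⁻ x, Set.indicator {x : ℕ → Bool | x n = true}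
        (fun _ => p n ^ k n) x ∂μ) = p n ^ (k n + 1) := by
      intro n
      rw [lintegral_indicator_const (hsetmeas n), hμn n, pow_succ]
    rw [tsum_congr this]
    exact hk
  have hae : ∀ᵐ x ∂μ, g x < ⊤ := ae_lt_top (by
    exact Measurable.ennreal_tsum hmeasn) hint
  have : {x : ℕ → Bool | ∑' n : {m | x m = true}, p n ^ k n = ⊤} ⊆
      {x | ¬ g x < ⊤} := by
    intro x hx
    simp only [Set.mem_setOf_eq, not_lt, top_le_iff]
    have : g x = ∑' n : {m | x m = true}, p n ^ k n := by
      rw [hg, tsum_subtype {m | x m = true} (fun n => p n ^ k n)]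
      refine tsum_congr fun n => ?_
      by_cases h : x n = true <;> simp [Set.indicator, h]
    rw [this]; exact hx
  exact measure_mono_null this hae
end

section
/- Every μ_p̂-null subset of 2^ω is the union of two μ_p̂-small sets. -/
open MeasureTheory Filter Set
open scoped ENNReal

/-- `H` is small with respect to `μ`: there is a partition of `ω` into consecutive finite
intervals `I n = [k n, k (n+1))` and sets `J n` of reals depending only on coordinates in
`I n`, such that every member of `H` is in infinitely many `J n`, and `∑ μ (J n) < ∞`. -/
def IsSmall (μ : Measure (ℕ → Bool)) (H : Set (ℕ → Bool)) : Prop :=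
  ∃ (k : ℕ → ℕ) (J : ℕ → Set (ℕ → Bool)),
    k 0 = 0 ∧ StrictMono k ∧
    (∀ n (x y : ℕ → Bool), (∀ i, k n ≤ i → i < k (n + 1) → x i = y i) →
      (x ∈ J n ↔ y ∈ J n)) ∧
    H ⊆ {x | {n | x ∈ J n}.Infinite} ∧
    ∑' n, μ (J n) ≠ ⊤

/-! Cover `H` by open sets `W r` of rapidly decreasing measure. Having chosen `W r`, pick a grid
point `g (r+1)` so large that all of `W r` except a set of tiny measure is a union of cylinders of
length `g (r+1)` inside `W r` (the part *resolved* at stage `r`), and put the unresolved rest into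
`W (r+1)`. Since every point of `H` has a cylinder neighbourhood inside `W r`, it cannot stay
unresolved forever: every point of `H` is resolved at infinitely many stages.

The resolved part `S r` depends on the coordinates below `g (r+1)`; forgetting the coordinates
below `g (r-1)` turns it into the piece `B r` depending only on `[g (r-1), g (r+1))`. By
independence of the coordinates this costs at most the factor `(∏_{i < g (r-1)} p i)⁻¹`, which was
paid for in advance by requiring `μ (W r) ≤ 2⁻ʳ ∏_{i < g (r-1)} p i`; so `∑ μ (B r) < ∞`. The
pieces `B r` with `r` odd, resp. even, sit on the interval partitions `[g (2n), g (2n+2))`, resp.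
`[g (2n-1), g (2n+1))`, and a point of `H` lies in infinitely many pieces of one of the two
kinds. -/

open ProbabilityTheory Topology

section CylInterior

variable {E : ℕ → Type*}

def cylInterior (N : ℕ) (W : Set (∀ n, E n)) : Set (∀ n, E n) := {x | PiNat.cylinder x N ⊆ W}

lemma cylInterior_subset (N : ℕ) (W : Set (∀ n, E n)) : cylInterior N W ⊆ W :=
  fun x hx => hx (PiNat.self_mem_cylinder x N)

lemma cylInterior_mono {M N : ℕ} (h : M ≤ N) (W : Set (∀ n, E n)) :
    cylInterior M W ⊆ cylInterior N W :=
  fun x hx => (PiNat.cylinder_anti x h).trans hx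

lemma dependsOn_cylInterior (N : ℕ) (W : Set (∀ n, E n)) :
    DependsOn (· ∈ cylInterior N W) (Iio N) := by
  intro x y hxy
  have : PiNat.cylinder x N = PiNat.cylinder y N :=
    PiNat.mem_cylinder_iff_eq.mp fun i hi => hxy i hi
  simp only [cylInterior, mem_ofPred_eq, this]

variable [∀ n, TopologicalSpace (E n)] [∀ n, DiscreteTopology (E n)]

lemma isOpen_of_dependsOn_Iio {D : Set (∀ n, E n)} {N : ℕ} (hD : DependsOn (· ∈ D) (Iio N)) :
    IsOpen D :=
  isOpen_iff_forall_mem_open.mpr fun x hx =>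
    ⟨PiNat.cylinder x N, fun _ hy => (hD fun i hi => hy i hi).mpr hx,
      PiNat.isOpen_cylinder E x N, PiNat.self_mem_cylinder x N⟩

lemma isClopen_of_dependsOn_Iio {D : Set (∀ n, E n)} {N : ℕ} (hD : DependsOn (· ∈ D) (Iio N)) :
    IsClopen D :=
  ⟨isOpen_compl_iff.mp (isOpen_of_dependsOn_Iio fun _ _ h => congrArg Not (hD h)),
    isOpen_of_dependsOn_Iio hD⟩

lemma isClopen_cylInterior (N : ℕ) (W : Set (∀ n, E n)) : IsClopen (cylInterior N W) :=
  isClopen_of_dependsOn_Iio (dependsOn_cylInterior N W)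

lemma exists_mem_cylInterior {W : Set (∀ n, E n)} (hW : IsOpen W) {x : ∀ n, E n} (hx : x ∈ W) :
    ∃ N, x ∈ cylInterior N W := by
  obtain ⟨_, ⟨z, N, rfl⟩, hxz, hzW⟩ :=
    (PiNat.isTopologicalBasis_cylinders E).exists_subset_of_mem_open hx hW
  exact ⟨N, (PiNat.mem_cylinder_iff_eq.mp hxz).trans_subset hzW⟩

lemma tendsto_measure_diff_cylInterior [MeasurableSpace (∀ n, E n)]
    [OpensMeasurableSpace (∀ n, E n)] (μ : Measure (∀ n, E n)) [IsFiniteMeasure μ]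
    {W : Set (∀ n, E n)} (hW : IsOpen W) :
    Tendsto (fun N => μ (W \ cylInterior N W)) atTop (𝓝 0) := by
  have hempty : ⋂ N, W \ cylInterior N W = ∅ := by
    refine eq_empty_of_forall_notMem fun x hx => ?_
    obtain ⟨N, hN⟩ := exists_mem_cylInterior hW (mem_iInter.mp hx 0).1
    exact (mem_iInter.mp hx N).2 hN
  have hmeas (N : ℕ) : MeasurableSet (W \ cylInterior N W) :=
    hW.measurableSet.diff (isClopen_cylInterior N W).isClosed.measurableSet
  simpa [hempty, Function.comp_def] using tendsto_measure_iInter_atTop (μ := μ)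
    (fun N => (hmeas N).nullMeasurableSet)
    (fun M N h => sdiff_subset_sdiff_right (cylInterior_mono h W)) ⟨0, measure_ne_top μ _⟩

end CylInterior

lemma IsBernoulli.iIndepFun_eval {ι : Type*} {μ : Measure (ι → Bool)} {p : ι → ℝ≥0∞}
    (hμ : IsBernoulli μ p) : iIndepFun (fun i (x : ι → Bool) => x i) μ := by
  classical
  have := hμ.1
  refine iIndepFun_iff_finset.mpr fun s => ?_
  change iIndepFun (fun (i : s) (x : ι → Bool) => x i) μ
  refine (iIndepFun_iff_map_fun_eq_pi_map fun i => (measurable_pi_apply _).aemeasurable).mpr ?_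
  refine Measure.ext_iff_singleton.mpr fun f => ?_
  let g : ι → Bool := fun i => if h : i ∈ s then f ⟨i, h⟩ else false
  have hfiber : (fun (x : ι → Bool) (i : s) => x i) ⁻¹' {f} = {x | ∀ i ∈ s, x i = g i} := by
    ext x
    simp only [mem_preimage, mem_singleton_iff, funext_iff, Subtype.forall]
    exact forall₂_congr fun i hi => by simp [g, hi]
  have hcoord (i : s) :
      (fun x : ι → Bool => x i) ⁻¹' {f i} = {x | ∀ j ∈ ({i.1} : Finset ι), x j = g j} := by
    ext x
    simp [g]
  rw [Measure.map_apply (measurable_pi_lambda _ fun i => measurable_pi_apply _)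
    (measurableSet_singleton f), hfiber, hμ.2, Measure.pi_singleton]
  simp_rw [Measure.map_apply (measurable_pi_apply _) (measurableSet_singleton _), hcoord, hμ.2,
    Finset.prod_singleton]
  exact (s.prod_coe_sort fun i => if g i then p i else 1 - p i).symm

lemma IsBernoulli.prod_le_measure_cylinder {μ : Measure (ℕ → Bool)} {p : ℕ → ℝ≥0∞}
    (hμ : IsBernoulli μ p) (hp : ∀ n, p n ≤ 1 / 2) (v : ℕ → Bool) (a : ℕ) :
    ∏ i ∈ Finset.range a, p i ≤ μ (PiNat.cylinder v a) := by
  have hcyl : PiNat.cylinder v a = {x | ∀ i ∈ Finset.range a, x i = v i} := by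
    ext
    simp [PiNat.cylinder]
  rw [hcyl, hμ.2]
  refine Finset.prod_le_prod' fun i _ => ?_
  split_ifs
  · exact le_rfl
  · refine ENNReal.le_sub_of_add_le_left (ne_top_of_le_ne_top (by simp) (hp i)) ?_
    calc p i + p i ≤ 1 / 2 + 1 / 2 := add_le_add (hp i) (hp i)
      _ = 1 := ENNReal.add_halves 1

def tailSaturation (a : ℕ) (D : Set (ℕ → Bool)) : Set (ℕ → Bool) :=
  {x | ∃ w, (Iio a).piecewise w x ∈ D}

lemma subset_tailSaturation (a : ℕ) (D : Set (ℕ → Bool)) : D ⊆ tailSaturation a D :=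
  fun x hx => ⟨x, by rwa [piecewise_same]⟩

lemma dependsOn_tailSaturation {a N : ℕ} {D : Set (ℕ → Bool)} (hD : DependsOn (· ∈ D) (Iio N)) :
    DependsOn (· ∈ tailSaturation a D) (Ico a N) := by
  have key (x y : ℕ → Bool) (hxy : ∀ i ∈ Ico a N, x i = y i) :
      x ∈ tailSaturation a D → y ∈ tailSaturation a D := by
    rintro ⟨w, hw⟩
    refine ⟨w, (hD fun i (hi : i < N) => ?_).mp hw⟩
    by_cases hia : i < a
    · simp [piecewise, hia]
    · simp [piecewise, hia, hxy i ⟨not_lt.mp hia, hi⟩]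
  exact fun x y h => propext ⟨key x y h, key y x fun i hi => (h i hi).symm⟩

section Independence

variable {μ : Measure (ℕ → Bool)}

lemma measure_cylinder_mul_le (hind : iIndepFun (fun i (x : ℕ → Bool) => x i) μ)
    {D : Set (ℕ → Bool)} (hD : MeasurableSet D) (a : ℕ) (w : ℕ → Bool) :
    μ (PiNat.cylinder w a) * μ ((fun x => (Iio a).piecewise w x) ⁻¹' D) ≤
      μ (PiNat.cylinder w a ∩ D) := by
  let m (i : ℕ) : MeasurableSpace (ℕ → Bool) := .comap (fun x => x i) inferInstance
  have hm {S : Set ℕ} {i : ℕ} (hi : i ∈ S) : Measurable[⨆ j ∈ S, m j] fun x : ℕ → Bool => x i :=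
    Measurable.of_comap_le (le_iSup₂ (f := fun j (_ : j ∈ S) => m j) i hi)
  have hhead : MeasurableSet[⨆ i ∈ Iio a, m i] (PiNat.cylinder w a) := by
    have : PiNat.cylinder w a = ⋂ i ∈ Iio a, (fun x : ℕ → Bool => x i) ⁻¹' {w i} := by
      ext
      simp [PiNat.cylinder]
    rw [this]
    exact .biInter (to_countable _) fun i hi => hm hi (measurableSet_singleton _)
  have htail : MeasurableSet[⨆ i ∈ Ici a, m i] ((fun x => (Iio a).piecewise w x) ⁻¹' D) := by
    refine hD.preimage (@measurable_pi_lambda _ _ _ (⨆ i ∈ Ici a, m i) _ _ fun i => ?_)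
    by_cases hia : i < a
    · simp only [piecewise, mem_Iio, hia, if_true]
      exact measurable_const
    · simp only [piecewise, mem_Iio, hia, if_false]
      exact hm (mem_Ici.mpr (not_lt.mp hia))
  have hindep : Indep (⨆ i ∈ Iio a, m i) (⨆ i ∈ Ici a, m i) μ :=
    indep_iSup_of_disjoint (fun i => (measurable_pi_apply i).comap_le) hind.iIndep
      (Iio_disjoint_Ici le_rfl)
  rw [← (Indep_iff _ _ μ).mp hindep _ _ hhead htail]
  refine measure_mono fun x ⟨hxw, hx⟩ => ⟨hxw, ?_⟩
  have : (Iio a).piecewise w x = x := by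
    funext i
    by_cases hia : i < a
    · simp [piecewise, hia, hxw i hia]
    · simp [piecewise, hia]
  rwa [mem_preimage, this] at hx

/-- Split `D` along the patterns `v` of the first `a` coordinates: by independence, the fibre over
`v` has measure at least `μ (cylinder v a)` times that of the set of tails completing `v` to a point
of `D`, and these tail sets cover the saturation. -/
lemma mul_measure_tailSaturation_le (hind : iIndepFun (fun i (x : ℕ → Bool) => x i) μ)
    {a : ℕ} {c : ℝ≥0∞} (hc : ∀ v, c ≤ μ (PiNat.cylinder v a)) {D : Set (ℕ → Bool)}
    (hD : MeasurableSet D) :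
    c * μ (tailSaturation a D) ≤ μ D := by
  classical
  let R : (ℕ → Bool) → (Fin a → Bool) := fun x j => x j
  have hR : Measurable R := measurable_pi_lambda _ fun j => measurable_pi_apply _
  let ext (v : Fin a → Bool) : ℕ → Bool := fun i => if h : i < a then v ⟨i, h⟩ else false
  let E (v : Fin a → Bool) : Set (ℕ → Bool) := (fun x => (Iio a).piecewise (ext v) x) ⁻¹' D
  have hfiber (v : Fin a → Bool) : R ⁻¹' {v} = PiNat.cylinder (ext v) a := by
    ext x
    simp only [mem_preimage, mem_singleton_iff, funext_iff, Fin.forall_iff,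
      PiNat.mem_cylinder_iff]
    exact forall₂_congr fun i hi => by simp [R, ext, hi]
  have hcover : tailSaturation a D ⊆ ⋃ v, E v := by
    rintro x ⟨w, hw⟩
    refine mem_iUnion.mpr ⟨R w, ?_⟩
    have : (Iio a).piecewise (ext (R w)) x = (Iio a).piecewise w x := by
      funext i
      by_cases hia : i < a <;> simp [piecewise, hia, R, ext]
    simpa [E, this] using hw
  calc c * μ (tailSaturation a D) ≤ c * ∑ v, μ (E v) := by
        gcongr
        exact (measure_mono hcover).trans (measure_iUnion_fintype_le μ E)
    _ = ∑ v, c * μ (E v) := Finset.mul_sum _ _ _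
    _ ≤ ∑ v, μ (R ⁻¹' {v}) * μ (E v) := by
        gcongr with v
        exact hfiber v ▸ hc (ext v)
    _ ≤ ∑ v, μ (R ⁻¹' {v} ∩ D) := by
        gcongr with v
        exact hfiber v ▸ measure_cylinder_mul_le hind hD a (ext v)
    _ = μ D := by
        simp_rw [← Measure.restrict_apply (hR (measurableSet_singleton _))]
        rw [sum_measure_preimage_singleton _ fun v _ => hR (measurableSet_singleton v)]
        simp

end Independence
/-- The budget `ε r (grid r)` for `cover (r + 1)` may depend on the grid point chosen before it:
this is what pays for saturating the resolved parts later on. -/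
structure NullCover (μ : Measure (ℕ → Bool)) (H : Set (ℕ → Bool)) (ε : ℕ → ℕ → ℝ≥0∞) where
  grid : ℕ → ℕ
  cover : ℕ → Set (ℕ → Bool)
  grid_zero : grid 0 = 0
  strictMono_grid : StrictMono grid
  isOpen_cover (r : ℕ) : IsOpen (cover r)
  subset_cover (r : ℕ) : H ⊆ cover r
  cover_diff_subset (r : ℕ) : cover r \ cylInterior (grid (r + 1)) (cover r) ⊆ cover (r + 1)
  measure_cover_succ_le (r : ℕ) : μ (cover (r + 1)) ≤ ε r (grid r)

namespace NullCover

variable {μ : Measure (ℕ → Bool)} {H : Set (ℕ → Bool)} {ε : ℕ → ℕ → ℝ≥0∞}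

lemma exists_next_cover [IsFiniteMeasure μ] (hH : μ H = 0) (W : TopologicalSpace.Opens (ℕ → Bool))
    (n : ℕ) {δ : ℝ≥0∞} (hδ : δ ≠ 0) :
    ∃ N, n < N ∧ ∃ W' : TopologicalSpace.Opens (ℕ → Bool),
      H ⊆ W' ∧ (W : Set (ℕ → Bool)) \ cylInterior N W ⊆ W' ∧ μ W' ≤ δ := by
  have hδ2 : 0 < δ / 2 := ENNReal.half_pos hδ
  obtain ⟨G, hHG, hG, hμG⟩ := H.exists_isOpen_lt_of_lt (δ / 2) (hH ▸ hδ2)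
  obtain ⟨N, hμN, hnN⟩ := (((tendsto_measure_diff_cylInterior μ W.isOpen).eventually
    (gt_mem_nhds hδ2)).and (eventually_gt_atTop n)).exists
  refine ⟨N, hnN, ⟨G ∪ W \ cylInterior N W,
    hG.union (W.isOpen.sdiff (isClopen_cylInterior N _).isClosed)⟩,
    hHG.trans subset_union_left, subset_union_right, ?_⟩
  calc μ (G ∪ W \ cylInterior N W) ≤ μ G + μ (W \ cylInterior N W) := measure_union_le _ _
    _ ≤ δ / 2 + δ / 2 := add_le_add hμG.le hμN.le
    _ = δ := ENNReal.add_halves δ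

lemma nonempty [IsFiniteMeasure μ] (hH : μ H = 0) (hε : ∀ r n, ε r n ≠ 0) :
    Nonempty (NullCover μ H ε) := by
  choose N hN W hHW hdiff hμW using fun r (s : ℕ × TopologicalSpace.Opens (ℕ → Bool)) =>
    exists_next_cover hH s.2 s.1 (hε r s.1)
  let seq (r : ℕ) : ℕ × TopologicalSpace.Opens (ℕ → Bool) :=
    Nat.rec (0, ⊤) (fun r s => (N r s, W r s)) r
  exact ⟨{
    grid r := (seq r).1
    cover r := (seq r).2
    grid_zero := rfl
    strictMono_grid := strictMono_nat_of_lt_succ fun r => hN r (seq r)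
    isOpen_cover r := (seq r).2.isOpen
    subset_cover
      | 0 => subset_univ H
      | r + 1 => hHW r (seq r)
    cover_diff_subset r := hdiff r (seq r)
    measure_cover_succ_le r := hμW r (seq r) }⟩

variable (C : NullCover μ H ε)

def resolved (r : ℕ) : Set (ℕ → Bool) := cylInterior (C.grid (r + 1)) (C.cover r)

lemma mem_cylInterior_cover_succ {r ℓ : ℕ} {x : ℕ → Bool} (hx : x ∈ cylInterior ℓ (C.cover r))
    (hxr : x ∉ C.resolved r) : x ∈ cylInterior ℓ (C.cover (r + 1)) := by
  have hlt : C.grid (r + 1) < ℓ := lt_of_not_ge fun h => hxr (cylInterior_mono h _ hx)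
  intro y hy
  refine C.cover_diff_subset r ⟨hx hy, fun hyr => hxr ?_⟩
  exact (dependsOn_cylInterior _ _ fun i (hi : i < _) => hy i (hi.trans hlt)).mp hyr

lemma infinite_setOf_mem_resolved {x : ℕ → Bool} (hx : x ∈ H) :
    {r | x ∈ C.resolved r}.Infinite := by
  intro hfin
  obtain ⟨M, hM⟩ := hfin.bddAbove
  have hnot (r : ℕ) (hr : M < r) : x ∉ C.resolved r := fun hxr => (hM hxr).not_gt hr
  obtain ⟨ℓ, hℓ⟩ := exists_mem_cylInterior (C.isOpen_cover (M + 1)) (C.subset_cover (M + 1) hx)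
  have hall (r : ℕ) (hr : M + 1 ≤ r) : x ∈ cylInterior ℓ (C.cover r) := by
    induction r, hr using Nat.le_induction with
    | base => exact hℓ
    | succ r hr ih => exact C.mem_cylInterior_cover_succ ih (hnot r (by omega))
  have hℓg : ℓ ≤ C.grid (M + ℓ + 2) := (by omega : ℓ ≤ M + ℓ + 2).trans C.strictMono_grid.le_apply
  exact hnot (M + ℓ + 1) (by omega) (cylInterior_mono hℓg _ (hall _ (by omega)))

/-- For `r = 0`, `r - 1 = 0` and `grid 0 = 0`, so nothing is forgotten. -/
def piece (r : ℕ) : Set (ℕ → Bool) := tailSaturation (C.grid (r - 1)) (C.resolved r)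

lemma resolved_subset_piece (r : ℕ) : C.resolved r ⊆ C.piece r := subset_tailSaturation _ _

lemma dependsOn_piece (r : ℕ) :
    DependsOn (· ∈ C.piece r) (Ico (C.grid (r - 1)) (C.grid (r + 1))) :=
  dependsOn_tailSaturation (dependsOn_cylInterior _ _)

end NullCover

lemma IsSmall.mono {μ : Measure (ℕ → Bool)} {A B : Set (ℕ → Bool)} (hB : IsSmall μ B)
    (hAB : A ⊆ B) : IsSmall μ A := by
  obtain ⟨k, J, hk0, hk, hJ, hBJ, hsum⟩ := hB
  exact ⟨k, J, hk0, hk, hJ, hAB.trans hBJ, hsum⟩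

lemma isSmall_setOf_infinite {μ : Measure (ℕ → Bool)} {k : ℕ → ℕ} {J : ℕ → Set (ℕ → Bool)}
    (hk0 : k 0 = 0) (hk : StrictMono k) (hJ : ∀ n, DependsOn (· ∈ J n) (Ico (k n) (k (n + 1))))
    (hsum : ∑' n, μ (J n) ≠ ⊤) : IsSmall μ {x | {n | x ∈ J n}.Infinite} :=
  ⟨k, J, hk0, hk, fun n _ _ hxy => (hJ n fun i hi => hxy i hi.1 hi.2).to_iff, subset_rfl, hsum⟩

lemma Set.Infinite.exists_infinite_two_mul_add {s : Set ℕ} (hs : s.Infinite) :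
    ∃ c ≤ 1, {n | 2 * n + c ∈ s}.Infinite := by
  by_contra! h
  refine hs ((((h 0 zero_le_one).image (2 * · + 0)).union
    ((h 1 le_rfl).image (2 * · + 1))).subset ?_)
  intro r hr
  obtain ⟨m, rfl | rfl⟩ := Nat.even_or_odd' r
  · exact Or.inl ⟨m, hr, rfl⟩
  · exact Or.inr ⟨m, hr, rfl⟩

section Bernoulli

variable {μ : Measure (ℕ → Bool)} {p : ℕ → ℝ≥0∞} {H : Set (ℕ → Bool)}
  (C : NullCover μ H fun r n => 2⁻¹ ^ (r + 1) * ∏ i ∈ Finset.range n, p i)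

lemma NullCover.measure_piece_le (hμ : IsBernoulli μ p) (hp : ∀ n, 0 < p n ∧ p n ≤ 1 / 2)
    (r : ℕ) : μ (C.piece r) ≤ 2⁻¹ ^ r := by
  have := hμ.1
  set q := ∏ i ∈ Finset.range (C.grid (r - 1)), p i
  have hq0 : q ≠ 0 := Finset.prod_ne_zero_iff.mpr fun i _ => (hp i).1.ne'
  have hqtop : q ≠ ⊤ := ENNReal.prod_ne_top fun i _ => ne_top_of_le_ne_top (by simp) (hp i).2
  have hres : μ (C.resolved r) ≤ 2⁻¹ ^ r * q := by
    refine (measure_mono (cylInterior_subset _ _)).trans ?_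
    cases r with
    | zero => simpa [q, C.grid_zero] using prob_le_one
    | succ r => exact C.measure_cover_succ_le r
  have hsat : q * μ (C.piece r) ≤ μ (C.resolved r) :=
    mul_measure_tailSaturation_le hμ.iIndepFun_eval
      (fun v => hμ.prod_le_measure_cylinder (fun n => (hp n).2) v _)
      (isClopen_cylInterior _ _).isClosed.measurableSet
  exact (ENNReal.mul_le_mul_iff_right hq0 hqtop).mp (hsat.trans (hres.trans_eq (mul_comm _ _)))

lemma NullCover.isSmall_setOf_infinite_piece (hμ : IsBernoulli μ p)
    (hp : ∀ n, 0 < p n ∧ p n ≤ 1 / 2) {c : ℕ} (hc : c ≤ 1) :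
    IsSmall μ {x | {n | x ∈ C.piece (2 * n + c)}.Infinite} := by
  refine isSmall_setOf_infinite (k := fun n => C.grid (2 * n + c - 1)) ?_ ?_ (fun n => ?_) ?_
  · rw [show 2 * 0 + c - 1 = 0 by omega, C.grid_zero]
  · exact C.strictMono_grid.comp fun m n h => by omega
  · rw [show 2 * (n + 1) + c - 1 = 2 * n + c + 1 by omega]
    exact C.dependsOn_piece _
  · refine ne_top_of_le_ne_top ((tsum_geometric_lt_top (r := 2⁻¹)).mpr (by norm_num)).ne
      (ENNReal.tsum_le_tsum fun n => ?_)
    exact (C.measure_piece_le hμ hp _).trans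
      (pow_le_pow_of_le_one zero_le (by norm_num) (by omega))

end Bernoulli

theorem null_eq_union_two_small (μ : Measure (ℕ → Bool)) (p : ℕ → ℝ≥0∞)
    (hp : ∀ n, 0 < p n ∧ p n ≤ 1 / 2) (hμ : IsBernoulli μ p)
    (H : Set (ℕ → Bool)) (hH : μ H = 0) :
    ∃ A B : Set (ℕ → Bool), IsSmall μ A ∧ IsSmall μ B ∧ H = A ∪ B := by
  have := hμ.1
  obtain ⟨C⟩ := NullCover.nonempty (ε := fun r n => 2⁻¹ ^ (r + 1) * ∏ i ∈ Finset.range n, p i) hH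
    fun r n => mul_ne_zero (by simp) (Finset.prod_ne_zero_iff.mpr fun i _ => (hp i).1.ne')
  refine ⟨H ∩ {x | {n | x ∈ C.piece (2 * n + 0)}.Infinite},
    H ∩ {x | {n | x ∈ C.piece (2 * n + 1)}.Infinite},
    (C.isSmall_setOf_infinite_piece hμ hp zero_le_one).mono inter_subset_right,
    (C.isSmall_setOf_infinite_piece hμ hp le_rfl).mono inter_subset_right, ?_⟩
  rw [← inter_union_distrib_left, eq_comm, inter_eq_left]
  intro x hx
  obtain ⟨c, hc, hinf⟩ := ((C.infinite_setOf_mem_resolved hx).mono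
    fun r hr => C.resolved_subset_piece r hr).exists_infinite_two_mul_add
  interval_cases c
  exacts [Or.inl hinf, Or.inr hinf]
end

section
/- Let p̂ and q̂ be sequences in (0,1/2] with p_n ≤ q_n for all but finitely many n, and let F be a nonprincipal filter on ω. If μ_q̂(F) = 0 then μ_p̂(F) = 0. -/
open MeasureTheory Filter Set
open scoped ENNReal


/-- affine preimage volume -/
lemma vol_preimage_affine (b c : ℝ) (hc : 0 < c) (S : Set ℝ) :
    volume ((fun u => (u - b) / c) ⁻¹' S) = ENNReal.ofReal c * volume S := by
  have h1 : (fun u : ℝ => (u - b) / c) = (fun v : ℝ => c⁻¹ * v) ∘ (fun u : ℝ => -b + u) := by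
    funext u; simp [div_eq_inv_mul, sub_eq_neg_add]
  rw [h1, Set.preimage_comp]
  rw [measure_preimage_add]
  rw [Real.volume_preimage_mul_left (inv_ne_zero hc.ne')]
  rw [inv_inv, abs_of_pos hc]

noncomputable def stepMap (a u : ℝ) : ℝ := if u < a then u / a else (u - a) / (1 - a)

noncomputable def seqMap (A : ℕ → ℝ) (u : ℝ) : ℕ → ℝ
  | 0 => u
  | n + 1 => stepMap (A n) (seqMap A u n)

lemma seqMap_shift (A : ℕ → ℝ) (u : ℝ) (n : ℕ) :
    seqMap A u (n + 1) = seqMap (A ∘ Nat.succ) (stepMap (A 0) u) n := by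
  induction n with
  | zero => rfl
  | succ n ih => show stepMap (A (n+1)) (seqMap A u (n+1)) = _; rw [ih]; rfl

lemma measurable_stepMap (a : ℝ) : Measurable (stepMap a) := by
  unfold stepMap
  exact Measurable.ite measurableSet_Iio (measurable_id.div_const a)
    ((measurable_id.sub_const a).div_const (1 - a))

lemma measurable_seqMap (A : ℕ → ℝ) (n : ℕ) : Measurable (fun u => seqMap A u n) := by
  induction n with
  | zero => exact measurable_id
  | succ n ih => exact (measurable_stepMap (A n)).comp ih

lemma measurableSet_E (A : ℕ → ℝ) (s : Finset ℕ) :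
    MeasurableSet (Ico (0:ℝ) 1 ∩ {u | ∀ i ∈ s, seqMap A u i < A i}) := by
  apply measurableSet_Ico.inter
  have : {u | ∀ i ∈ s, seqMap A u i < A i} = ⋂ i ∈ s, {u | seqMap A u i < A i} := by
    ext u; simp
  rw [this]
  exact MeasurableSet.biInter (s : Set ℕ).to_countable
    (fun i _ => measurableSet_lt (measurable_seqMap A i) measurable_const)

lemma vol_E : ∀ (n : ℕ) (A : ℕ → ℝ), (∀ i, 0 < A i ∧ A i ≤ 1) → ∀ (s : Finset ℕ),
    (∀ i ∈ s, i < n) →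
    volume (Ico (0:ℝ) 1 ∩ {u | ∀ i ∈ s, seqMap A u i < A i}) =
      ENNReal.ofReal (∏ i ∈ s, A i) := by
  intro n
  induction n with
  | zero =>
    intro A hA s hs
    have : s = ∅ := Finset.eq_empty_of_forall_notMem fun i hi => Nat.not_lt_zero i (hs i hi)
    subst this
    simp [Real.volume_Ico]
  | succ n ih =>
    intro A hA s hs
    have hinj : Set.InjOn Nat.succ (Nat.succ ⁻¹' (s.erase 0)) :=
      fun a _ b _ h => Nat.succ_injective h
    set s' : Finset ℕ := (s.erase 0).preimage Nat.succ hinj with hs'def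
    have hmem' : ∀ j, j ∈ s' ↔ j + 1 ∈ s := by
      intro j
      simp [hs'def, Finset.mem_preimage, Finset.mem_erase, Nat.succ_ne_zero]
    have hs' : ∀ j ∈ s', j < n := by
      intro j hj
      have := hs (j+1) ((hmem' j).1 hj)
      omega
    set a0 := A 0 with ha0def
    have ha0 : 0 < a0 := (hA 0).1
    have ha01 : a0 ≤ 1 := (hA 0).2
    have hA' : ∀ i, 0 < (A ∘ Nat.succ) i ∧ (A ∘ Nat.succ) i ≤ 1 := fun i => hA (i + 1)
    have ihE := ih (A ∘ Nat.succ) hA' s' hs'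
    set E'' := Ico (0:ℝ) 1 ∩ {v | ∀ j ∈ s', seqMap (A ∘ Nat.succ) v j < (A ∘ Nat.succ) j}
      with hE''def
    have hE''meas : MeasurableSet E'' := measurableSet_E _ _
    have hE''sub : E'' ⊆ Ico (0:ℝ) 1 := inter_subset_left
    -- decomposition of the condition
    have hdec : ∀ u : ℝ, (∀ i ∈ s, seqMap A u i < A i) ↔
        ((0 ∈ s → u < a0) ∧ ∀ j ∈ s', seqMap (A ∘ Nat.succ) (stepMap a0 u) j
          < (A ∘ Nat.succ) j) := by
      intro u
      constructor
      · intro H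
        refine ⟨fun h0 => H 0 h0, fun j hj => ?_⟩
        have := H (j+1) ((hmem' j).1 hj)
        rwa [seqMap_shift] at this
      · rintro ⟨H0, H⟩ i hi
        match i with
        | 0 => exact H0 hi
        | (j+1) =>
          rw [seqMap_shift]
          exact H j ((hmem' j).2 hi)
    -- the product identity
    have hprod' : ∏ j ∈ s', A (j + 1) = ∏ i ∈ s.erase 0, A i := by
      refine Finset.prod_preimage Nat.succ (s.erase 0) hinj A ?_
      intro i hi hri
      exfalso
      apply hri
      rcases i with _ | j
      · exact absurd rfl (Finset.mem_erase.1 hi).1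
      · exact ⟨j, rfl⟩
    by_cases h0s : 0 ∈ s
    · -- case 0 ∈ s
      have hset : Ico (0:ℝ) 1 ∩ {u | ∀ i ∈ s, seqMap A u i < A i}
          = (fun u => (u - 0) / a0) ⁻¹' E'' := by
        ext u
        simp only [mem_inter_iff, mem_Ico, mem_setOf_eq, mem_preimage, sub_zero, hE''def]
        constructor
        · rintro ⟨⟨hu0, _⟩, hc⟩
          rcases (hdec u).1 hc with ⟨H0, H⟩
          have hlt : u < a0 := H0 h0s
          have hst : stepMap a0 u = u / a0 := if_pos hlt
          refine ⟨⟨div_nonneg hu0 ha0.le, (div_lt_one ha0).2 hlt⟩, ?_⟩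
          intro j hj
          have := H j hj
          rwa [hst] at this
        · rintro ⟨⟨hd0, hd1⟩, H⟩
          have hu0 : 0 ≤ u := by
            have := mul_nonneg hd0 ha0.le
            rwa [div_mul_cancel₀ u ha0.ne'] at this
          have hlt : u < a0 := (div_lt_one ha0).1 hd1
          have hst : stepMap a0 u = u / a0 := if_pos hlt
          refine ⟨⟨hu0, lt_of_lt_of_le hlt ha01⟩, ?_⟩
          apply (hdec u).2
          refine ⟨fun _ => hlt, fun j hj => ?_⟩
          rw [hst]
          exact H j hj
      rw [hset, vol_preimage_affine 0 a0 ha0 E'' , ihE]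
      rw [← ENNReal.ofReal_mul ha0.le]
      congr 1
      simp only [Function.comp_apply]
      rw [hprod']
      exact Finset.mul_prod_erase s A h0s
    · -- case 0 ∉ s
      have herase : s.erase 0 = s := Finset.erase_eq_of_notMem h0s
      rw [herase] at hprod'
      by_cases ha1 : a0 = 1
      · -- a0 = 1
        have hset : Ico (0:ℝ) 1 ∩ {u | ∀ i ∈ s, seqMap A u i < A i} = E'' := by
          ext u
          simp only [mem_inter_iff, mem_Ico, mem_setOf_eq, hE''def]
          have hstep : ∀ u : ℝ, u < 1 → stepMap a0 u = u := by
            intro u hu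
            rw [stepMap, ha1, if_pos hu, div_one]
          constructor
          · rintro ⟨⟨hu0, hu1⟩, hc⟩
            rcases (hdec u).1 hc with ⟨_, H⟩
            refine ⟨⟨hu0, hu1⟩, fun j hj => ?_⟩
            have := H j hj
            rwa [hstep u hu1] at this
          · rintro ⟨⟨hu0, hu1⟩, H⟩
            refine ⟨⟨hu0, hu1⟩, (hdec u).2 ⟨fun h => absurd h h0s, fun j hj => ?_⟩⟩
            rw [hstep u hu1]
            exact H j hj
        rw [hset, ihE]
        simp only [Function.comp_apply]
        rw [hprod']
      · -- a0 < 1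
        have ha0lt1 : a0 < 1 := lt_of_le_of_ne ha01 ha1
        have h1a0 : 0 < 1 - a0 := by linarith
        have hset : Ico (0:ℝ) 1 ∩ {u | ∀ i ∈ s, seqMap A u i < A i}
            = (fun u => (u - 0) / a0) ⁻¹' E'' ∪ (fun u => (u - a0) / (1 - a0)) ⁻¹' E'' := by
          ext u
          simp only [mem_inter_iff, mem_Ico, mem_setOf_eq, mem_union, mem_preimage, sub_zero,
            hE''def]
          constructor
          · rintro ⟨⟨hu0, hu1⟩, hc⟩
            rcases (hdec u).1 hc with ⟨_, H⟩
            by_cases hlt : u < a0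
            · left
              have hst : stepMap a0 u = u / a0 := if_pos hlt
              refine ⟨⟨div_nonneg hu0 ha0.le, (div_lt_one ha0).2 hlt⟩, fun j hj => ?_⟩
              have := H j hj; rwa [hst] at this
            · right
              have hst : stepMap a0 u = (u - a0) / (1 - a0) := if_neg hlt
              push_neg at hlt
              refine ⟨⟨div_nonneg (by linarith) h1a0.le, (div_lt_one h1a0).2 (by linarith)⟩,
                fun j hj => ?_⟩
              have := H j hj; rwa [hst] at this
          · rintro (⟨⟨hd0, hd1⟩, H⟩ | ⟨⟨hd0, hd1⟩, H⟩)
            · have hu0 : 0 ≤ u := by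
                have := mul_nonneg hd0 ha0.le
                rwa [div_mul_cancel₀ u ha0.ne'] at this
              have hlt : u < a0 := (div_lt_one ha0).1 hd1
              have hst : stepMap a0 u = u / a0 := if_pos hlt
              refine ⟨⟨hu0, lt_of_lt_of_le hlt ha01⟩, (hdec u).2
                ⟨fun h => absurd h h0s, fun j hj => ?_⟩⟩
              rw [hst]; exact H j hj
            · have hge : a0 ≤ u := by
                have := mul_nonneg hd0 h1a0.le
                rw [div_mul_cancel₀ _ h1a0.ne'] at this
                linarith
              have hu1 : u < 1 := by
                have := (div_lt_one h1a0).1 hd1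
                linarith
              have hst : stepMap a0 u = (u - a0) / (1 - a0) := if_neg (not_lt.2 hge)
              refine ⟨⟨le_trans ha0.le hge, hu1⟩, (hdec u).2
                ⟨fun h => absurd h h0s, fun j hj => ?_⟩⟩
              rw [hst]; exact H j hj
        have hdisj : Disjoint ((fun u => (u - 0) / a0) ⁻¹' E'')
            ((fun u => (u - a0) / (1 - a0)) ⁻¹' E'') := by
          apply Set.disjoint_left.2
          intro u hu1 hu2
          simp only [mem_preimage, sub_zero] at hu1 hu2
          have h1 := hE''sub hu1
          have h2 := hE''sub hu2
          simp only [mem_Ico] at h1 h2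
          have : u < a0 := (div_lt_one ha0).1 h1.2
          have : a0 ≤ u := by
            have := mul_nonneg h2.1 h1a0.le
            rw [div_mul_cancel₀ _ h1a0.ne'] at this
            linarith
          linarith
        rw [hset, measure_union hdisj
          ((measurable_id.sub_const a0).div_const (1 - a0) hE''meas),
          vol_preimage_affine 0 a0 ha0 E'', vol_preimage_affine a0 (1 - a0) h1a0 E'', ihE,
          ← add_mul, ← ENNReal.ofReal_add ha0.le h1a0.le]
        rw [add_sub_cancel, ENNReal.ofReal_one, one_mul]
        simp only [Function.comp_apply]
        rw [hprod']

noncomputable def phiMap (A : ℕ → ℝ) (u : ℝ) (n : ℕ) : Bool := decide (A n ≤ seqMap A u n)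

lemma measurable_phiMap (A : ℕ → ℝ) : Measurable (phiMap A) := by
  rw [measurable_pi_iff]
  intro n
  apply measurable_to_countable'
  intro b
  cases b
  · have : (fun u => phiMap A u n) ⁻¹' {false} = {u | seqMap A u n < A n} := by
      ext u; simp [phiMap, not_le]
    rw [this]
    exact measurableSet_lt (measurable_seqMap A n) measurable_const
  · have : (fun u => phiMap A u n) ⁻¹' {true} = {u | A n ≤ seqMap A u n} := by
      ext u; simp [phiMap]
    rw [this]
    exact measurableSet_le measurable_const (measurable_seqMap A n)

lemma measurableSet_lowerCyl (s : Finset ℕ) :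
    MeasurableSet {x : ℕ → Bool | ∀ i ∈ s, x i = false} := by
  have : {x : ℕ → Bool | ∀ i ∈ s, x i = false} = ⋂ i ∈ s, (fun x : ℕ → Bool => x i) ⁻¹' {false} := by
    ext x; simp
  rw [this]
  exact MeasurableSet.biInter (s : Set ℕ).to_countable
    (fun i _ => measurable_pi_apply i (measurableSet_singleton false))

noncomputable def sigmaM (A : ℕ → ℝ) : Measure (ℕ → Bool) :=
  Measure.map (phiMap A) (volume.restrict (Ico 0 1))

instance sigmaM_prob (A : ℕ → ℝ) : IsProbabilityMeasure (sigmaM A) := by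
  constructor
  rw [sigmaM, Measure.map_apply (measurable_phiMap A) MeasurableSet.univ, preimage_univ,
    Measure.restrict_apply MeasurableSet.univ, univ_inter, Real.volume_Ico]
  norm_num

lemma sigmaM_cyl (A : ℕ → ℝ) (hA : ∀ i, 0 < A i ∧ A i ≤ 1) (s : Finset ℕ) :
    sigmaM A {x | ∀ i ∈ s, x i = false} = ENNReal.ofReal (∏ i ∈ s, A i) := by
  rw [sigmaM, Measure.map_apply (measurable_phiMap A) (measurableSet_lowerCyl s),
    Measure.restrict_apply' measurableSet_Ico]
  have : phiMap A ⁻¹' {x | ∀ i ∈ s, x i = false} ∩ Ico 0 1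
      = Ico (0:ℝ) 1 ∩ {u | ∀ i ∈ s, seqMap A u i < A i} := by
    rw [inter_comm]
    congr 1
    ext u
    simp [phiMap, not_le]
  rw [this]
  exact vol_E ((s.sup id) + 1) A hA s
    (fun i hi => Nat.lt_succ_of_le (Finset.le_sup (f := id) hi))

lemma measure_ext_lowerCyl (μ ν : Measure (ℕ → Bool)) [IsProbabilityMeasure μ]
    [IsProbabilityMeasure ν]
    (h : ∀ s : Finset ℕ, μ {x | ∀ i ∈ s, x i = false} = ν {x | ∀ i ∈ s, x i = false}) :
    μ = ν := by
  set C : Set (Set (ℕ → Bool)) := {S | ∃ s : Finset ℕ, S = {x | ∀ i ∈ s, x i = false}} with hC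
  have hpi : IsPiSystem C := by
    rintro S ⟨s, rfl⟩ T ⟨t, rfl⟩ _
    refine ⟨s ∪ t, ?_⟩
    ext x
    simp only [mem_inter_iff, mem_setOf_eq, Finset.mem_union]
    constructor
    · rintro ⟨h1, h2⟩ i (hi | hi); exacts [h1 i hi, h2 i hi]
    · intro H; exact ⟨fun i hi => H i (Or.inl hi), fun i hi => H i (Or.inr hi)⟩
  have hgen : (inferInstance : MeasurableSpace (ℕ → Bool)) = MeasurableSpace.generateFrom C := by
    apply le_antisymm
    · refine iSup_le fun i => ?_
      rw [← measurable_iff_comap_le]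
      intro S _
      have : (fun x : ℕ → Bool => x i) ⁻¹' S = ⋃ b ∈ S, (fun x : ℕ → Bool => x i) ⁻¹' {b} := by
        ext x; simp
      rw [this]
      refine MeasurableSet.biUnion S.to_countable fun b _ => ?_
      have hfalse : MeasurableSet[MeasurableSpace.generateFrom C]
          ((fun x : ℕ → Bool => x i) ⁻¹' {false}) := by
        apply MeasurableSpace.measurableSet_generateFrom
        refine ⟨{i}, ?_⟩
        ext x; simp
      cases b
      · exact hfalse
      · have : (fun x : ℕ → Bool => x i) ⁻¹' {true}
            = ((fun x : ℕ → Bool => x i) ⁻¹' {false})ᶜ := by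
          ext x; simp
        rw [this]
        exact hfalse.compl
    · refine MeasurableSpace.generateFrom_le ?_
      rintro S ⟨s, rfl⟩
      exact measurableSet_lowerCyl s
  refine ext_of_generate_finite C hgen hpi ?_ ?_
  · rintro S ⟨s, rfl⟩
    exact h s
  · simp

theorem null_mono_in_measure (p q : ℕ → ℝ≥0∞)
    (hp : ∀ n, 0 < p n ∧ p n ≤ 1 / 2) (hq : ∀ n, 0 < q n ∧ q n ≤ 1 / 2)
    (hpq : ∀ᶠ n in Filter.atTop, p n ≤ q n)
    (μp μq : Measure (ℕ → Bool)) (hμp : IsBernoulli μp p) (hμq : IsBernoulli μq q)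
    (F : Filter ℕ) [F.NeBot] (hF : F ≤ Filter.cofinite)
    (h : μq (filterSet F) = 0) :
    μp (filterSet F) = 0 := by
  haveI := hμp.1
  haveI := hμq.1
  obtain ⟨N, hN⟩ : ∃ N, ∀ n ≥ N, p n ≤ q n := eventually_atTop.1 hpq
  -- basic facts about p and q
  have hhalf : (1 / 2 : ℝ≥0∞) ≠ ⊤ := by norm_num
  have hptop : ∀ n, p n ≠ ⊤ := fun n => ne_top_of_le_ne_top hhalf (hp n).2
  have hqtop : ∀ n, q n ≠ ⊤ := fun n => ne_top_of_le_ne_top hhalf (hq n).2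
  have hhalfR : (1 / 2 : ℝ≥0∞).toReal = 1 / 2 := by norm_num
  have hptR : ∀ n, (p n).toReal ≤ 1 / 2 := by
    intro n
    rw [← hhalfR]
    exact ENNReal.toReal_mono hhalf (hp n).2
  have hqtR : ∀ n, (q n).toReal ≤ 1 / 2 := by
    intro n
    rw [← hhalfR]
    exact ENNReal.toReal_mono hhalf (hq n).2
  have hptpos : ∀ n, 0 < (p n).toReal := fun n => ENNReal.toReal_pos (hp n).1.ne' (hptop n)
  have hqtpos : ∀ n, 0 < (q n).toReal := fun n => ENNReal.toReal_pos (hq n).1.ne' (hqtop n)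
  have hpqt : ∀ n, N ≤ n → (p n).toReal ≤ (q n).toReal := fun n hn =>
    ENNReal.toReal_mono (hqtop n) (hN n hn)
  -- the auxiliary parameter sequence
  set a : ℕ → ℝ := fun n =>
    if n < N then 1 - (q n).toReal else (1 - (q n).toReal) / (1 - (p n).toReal) with ha
  have hA : ∀ i, 0 < a i ∧ a i ≤ 1 := by
    intro i
    by_cases hi : i < N
    · rw [ha]
      simp only [if_pos hi]
      constructor
      · have := hqtR i; linarith
      · have := (hqtpos i); linarith
    · rw [ha]
      simp only [if_neg hi]
      have h1q : 0 < 1 - (q i).toReal := by have := hqtR i; linarith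
      have h1p : 0 < 1 - (p i).toReal := by have := hptR i; linarith
      constructor
      · exact div_pos h1q h1p
      · rw [div_le_one h1p]
        have := hpqt i (not_lt.1 hi)
        linarith
  have hofReal : ∀ r : ℝ≥0∞, r ≠ ⊤ → ENNReal.ofReal (1 - r.toReal) = 1 - r := by
    intro r hr
    rw [ENNReal.ofReal_sub _ ENNReal.toReal_nonneg, ENNReal.ofReal_one,
      ENNReal.ofReal_toReal hr]
  have hlow : ∀ i, i < N → ENNReal.ofReal (a i) = 1 - q i := by
    intro i hi
    rw [ha]
    simp only [if_pos hi]
    exact hofReal _ (hqtop i)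
  have hhigh : ∀ i, N ≤ i → (1 - p i) * ENNReal.ofReal (a i) = 1 - q i := by
    intro i hi
    rw [ha]
    simp only [if_neg (not_lt.2 hi)]
    have h1p : 0 < 1 - (p i).toReal := by have := hptR i; linarith
    rw [← hofReal (p i) (hptop i), ← ENNReal.ofReal_mul (by linarith),
      mul_comm, div_mul_cancel₀ _ h1p.ne']
    exact hofReal _ (hqtop i)
  -- the coupling map
  set m' : (ℕ → Bool) × (ℕ → Bool) → (ℕ → Bool) :=
    fun yw n => if n < N then yw.2 n else (yw.1 n || yw.2 n) with hm'def
  have hm' : Measurable m' := by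
    rw [measurable_pi_iff]
    intro n
    by_cases hn : n < N
    · simp only [hm'def, if_pos hn]
      exact (measurable_pi_apply n).comp measurable_snd
    · simp only [hm'def, if_neg hn]
      have : (fun yw : (ℕ → Bool) × (ℕ → Bool) => (yw.1 n || yw.2 n))
          = (fun bc : Bool × Bool => bc.1 || bc.2) ∘
            (fun yw : (ℕ → Bool) × (ℕ → Bool) => (yw.1 n, yw.2 n)) := rfl
      rw [this]
      apply Measurable.comp (measurable_of_countable (fun bc : Bool × Bool => bc.1 || bc.2))
      apply Measurable.prodMk
      · exact (measurable_pi_apply n).comp measurable_fst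
      · exact (measurable_pi_apply n).comp measurable_snd
  set σ := sigmaM a with hσ
  set ν := μp.prod σ with hν
  haveI : IsProbabilityMeasure ν := by rw [hν]; infer_instance
  -- the pushforward is μq
  have hmap : Measure.map m' ν = μq := by
    haveI : IsProbabilityMeasure (Measure.map m' ν) :=
      Measure.isProbabilityMeasure_map hm'.aemeasurable
    apply measure_ext_lowerCyl
    intro s
    rw [Measure.map_apply hm' (measurableSet_lowerCyl s)]
    have hpre : m' ⁻¹' {x | ∀ i ∈ s, x i = false} =
        {y : ℕ → Bool | ∀ i ∈ s.filter (fun i => N ≤ i), y i = false} ×ˢ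
          {w : ℕ → Bool | ∀ i ∈ s, w i = false} := by
      ext ⟨y, w⟩
      simp only [mem_preimage, mem_setOf_eq, mem_prod, Finset.mem_filter, hm'def]
      constructor
      · intro H
        constructor
        · rintro i ⟨hi, hiN⟩
          have := H i hi
          rw [if_neg (not_lt.2 hiN)] at this
          exact (Bool.or_eq_false_iff.1 this).1
        · intro i hi
          have := H i hi
          by_cases hiN : i < N
          · rwa [if_pos hiN] at this
          · rw [if_neg hiN] at this
            exact (Bool.or_eq_false_iff.1 this).2
      · rintro ⟨H1, H2⟩ i hi
        by_cases hiN : i < N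
        · rw [if_pos hiN]; exact H2 i hi
        · rw [if_neg hiN]
          exact Bool.or_eq_false_iff.2 ⟨H1 i ⟨hi, not_lt.1 hiN⟩, H2 i hi⟩
    rw [hν, hpre, Measure.prod_prod, hμp.2 _ (fun _ => false), hσ, sigmaM_cyl a hA s,
      hμq.2 s (fun _ => false)]
    simp only [if_neg Bool.false_ne_true]
    rw [ENNReal.ofReal_prod_of_nonneg (fun i _ => (hA i).1.le),
      ← Finset.prod_filter_mul_prod_filter_not s (fun i => N ≤ i)
        (fun i => ENNReal.ofReal (a i)),
      ← mul_assoc, ← Finset.prod_mul_distrib,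
      ← Finset.prod_filter_mul_prod_filter_not s (fun i => N ≤ i) (fun i => 1 - q i)]
    congr 1
    · exact Finset.prod_congr rfl fun i hi => hhigh i (Finset.mem_filter.1 hi).2
    · exact Finset.prod_congr rfl fun i hi => hlow i (not_le.1 (Finset.mem_filter.1 hi).2)
  -- the null superset argument
  set B := toMeasurable μq (filterSet F) with hBdef
  have hB : MeasurableSet B := measurableSet_toMeasurable μq _
  have hBsub : filterSet F ⊆ B := subset_toMeasurable μq _
  have hB0 : μq B = 0 := by rw [hBdef, measure_toMeasurable]; exact h
  set D := m' ⁻¹' B with hDdef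
  have hD : MeasurableSet D := hB.preimage hm'
  have hνD : ν D = 0 := by
    have : ν D = Measure.map m' ν B := (Measure.map_apply hm' hB).symm
    rw [this, hmap]
    exact hB0
  have hf : Measurable (fun x => σ (Prod.mk x ⁻¹' D)) := measurable_measure_prodMk_left hD
  have hint : ∫⁻ x, σ (Prod.mk x ⁻¹' D) ∂μp = 0 := by
    rw [← hνD, hν, Measure.prod_apply hD]
  have hae : (fun x => σ (Prod.mk x ⁻¹' D)) =ᵐ[μp] 0 := (lintegral_eq_zero_iff hf).1 hint
  have hC0 : μp {x | σ (Prod.mk x ⁻¹' D) ≠ 0} = 0 := by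
    rw [Filter.EventuallyEq, ae_iff] at hae
    simpa using hae
  refine measure_mono_null ?_ hC0
  intro x hx
  have huniv : Prod.mk x ⁻¹' D = univ := by
    ext w
    simp only [hDdef, mem_preimage, mem_univ, iff_true]
    apply hBsub
    show {n | m' (x, w) n = true} ∈ F
    have hsub : {n | x n = true} ∩ {n | N ≤ n} ⊆ {n | m' (x, w) n = true} := by
      rintro n ⟨hxn, hNn⟩
      show (if n < N then w n else (x n || w n)) = true
      rw [if_neg (not_lt.2 hNn), hxn, Bool.true_or]
    refine mem_of_superset (inter_mem hx (hF ?_)) hsub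
    rw [mem_cofinite]
    have : {n : ℕ | N ≤ n}ᶜ = Iio N := by ext n; simp [not_le]
    rw [this]
    exact Set.finite_Iio N
  show σ (Prod.mk x ⁻¹' D) ≠ 0
  rw [huniv, measure_univ]
  exact one_ne_zero
end

section
/- Every rapid filter on ω is Lebesgue nonmeasurable (nonmeasurable with respect to the uniform product measure on 2^ω). -/
open MeasureTheory Filter Set
open scoped ENNReal

/-!
The set `A` of characteristic functions of members of `F` is invariant under flipping finitely
many bits and is disjoint from its image under flipping all bits, so by a zero-one law it is null
as soon as it is null-measurable. Cover a null `A` by sets `W n` depending only on the first `n`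
bits with `∑ μ (W n) < 1/2`, and choose `f` so fast-growing that the tails of this sum beyond
`f k` are tiny. For the `X ∈ F` that rapidity provides for `f`, setting the bits in `X` maps every
point into `A`, while it multiplies the measure of `W n` by at most `2 ^ |X ∩ [0, n)|`; the bound
`|X ∩ [0, f k)| ≤ k` keeps the total below `1`, a contradiction.
-/

open scoped Topology

variable {ι : Type*}

def boolCylinder (s : Finset ι) (f : ι → Bool) : Set (ι → Bool) :=
  {x | ∀ i ∈ s, x i = f i}

lemma boolCylinder_eq_restrict_preimage (s : Finset ι) (f : ι → Bool) :
    boolCylinder s f = s.restrict (π := fun _ => Bool) ⁻¹' {s.restrict f} := by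
  ext x
  simp [boolCylinder, funext_iff]

lemma measurableSet_boolCylinder (s : Finset ι) (f : ι → Bool) :
    MeasurableSet (boolCylinder s f) := by
  rw [boolCylinder_eq_restrict_preimage]
  exact measurableSet_singleton _ |>.preimage (by fun_prop)

lemma Finset.restrict_surjective {α : ι → Type*} [∀ i, Nonempty (α i)] (s : Finset ι) :
    Function.Surjective (s.restrict : (Π i, α i) → Π i : s, α i) := by
  classical
  intro v
  refine ⟨fun i => if h : i ∈ s then v ⟨i, h⟩ else Classical.arbitrary _, ?_⟩
  ext i
  simp

lemma measure_ext_of_boolCylinder {μ ν : Measure (ι → Bool)} [IsFiniteMeasure ν]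
    (h : ∀ s f, μ (boolCylinder s f) = ν (boolCylinder s f)) : μ = ν := by
  refine IsProjectiveLimit.unique (P := fun s => ν.map s.restrict) (fun s => ?_) fun _ => rfl
  refine Measure.ext_of_singleton fun v => ?_
  obtain ⟨f, rfl⟩ := s.restrict_surjective (α := fun _ => Bool) v
  rw [Measure.map_apply (by fun_prop) (measurableSet_singleton _),
    Measure.map_apply (by fun_prop) (measurableSet_singleton _),
    ← boolCylinder_eq_restrict_preimage, h]

def xorWith (g x : ι → Bool) : ι → Bool := fun i => xor (g i) (x i)

lemma measurable_xorWith (g : ι → Bool) : Measurable (xorWith g) :=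
  measurable_pi_lambda _ fun i =>
    (Measurable.of_discrete (f := fun b => xor (g i) b)).comp (measurable_pi_apply i)

lemma xorWith_preimage_boolCylinder (g : ι → Bool) (s : Finset ι) (f : ι → Bool) :
    xorWith g ⁻¹' boolCylinder s f = boolCylinder s (xorWith g f) := by
  ext x
  refine forall₂_congr fun i _ => ?_
  simp only [xorWith]
  cases g i <;> simp

lemma measurableSet_of_dependsOn {s : Set ι} (hs : s.Finite) {W : Set (ι → Bool)}
    (hW : DependsOn (· ∈ W) s) : MeasurableSet W := by
  have := hs.to_subtype
  let r : (ι → Bool) → s → Bool := fun x i => x i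
  have hpre : W = r ⁻¹' (r '' W) := by
    refine (subset_preimage_image _ _).antisymm ?_
    rintro x ⟨y, hy, hyx⟩
    exact cast (hW fun i hi => congrFun hyx ⟨i, hi⟩) hy
  rw [hpre]
  exact (Set.to_countable _).measurableSet.preimage (by fun_prop)

open Classical in
noncomputable def setBits (X : Set ι) (x : ι → Bool) : ι → Bool :=
  fun i => x i || decide (i ∈ X)

lemma setBits_preimage_eq_of_dependsOn {s : Set ι} {W : Set (ι → Bool)}
    (hW : DependsOn (· ∈ W) s) (X : Set ι) : setBits X ⁻¹' W = setBits (X ∩ s) ⁻¹' W := by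
  ext x
  refine Iff.of_eq (hW fun i hi => ?_)
  simp only [setBits]
  congr 1
  exact decide_eq_decide.2 (by simp [hi])

section Uniform

variable {μ : Measure (ι → Bool)}

lemma IsBernoulli.measure_boolCylinder (hμ : IsBernoulli μ fun _ => 1 / 2) (s : Finset ι)
    (f : ι → Bool) : μ (boolCylinder s f) = 2⁻¹ ^ s.card := by
  rw [boolCylinder, hμ.2, ← Finset.prod_const]
  refine Finset.prod_congr rfl fun i _ => ?_
  cases f i <;> simp [ENNReal.one_sub_inv_two]

lemma IsBernoulli.measurePreserving_xorWith (hμ : IsBernoulli μ fun _ => 1 / 2) (g : ι → Bool) :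
    MeasurePreserving (xorWith g) μ μ := by
  have := hμ.1
  refine ⟨measurable_xorWith g, measure_ext_of_boolCylinder fun s f => ?_⟩
  rw [Measure.map_apply (measurable_xorWith g) (measurableSet_boolCylinder s f),
    xorWith_preimage_boolCylinder, hμ.measure_boolCylinder, hμ.measure_boolCylinder]

lemma IsBernoulli.eq_smul_of_map_xorWith (hμ : IsBernoulli μ fun _ => 1 / 2)
    {ν : Measure (ι → Bool)} [IsFiniteMeasure ν]
    (hν : ∀ g : ι → Bool, {i | g i = true}.Finite → ν.map (xorWith g) = ν) :
    ν = ν univ • μ := by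
  classical
  have hconst : ∀ s (f f' : ι → Bool), ν (boolCylinder s f) = ν (boolCylinder s f') := by
    intro s f f'
    let g : ι → Bool := fun i => decide (i ∈ s) && xor (f i) (f' i)
    have hg : {i | g i = true}.Finite := s.finite_toSet.subset fun i hi => by simp_all [g]
    have hpre : xorWith g ⁻¹' boolCylinder s f = boolCylinder s f' := by
      rw [xorWith_preimage_boolCylinder]
      ext x
      refine forall₂_congr fun i hi => ?_
      simp only [xorWith, g, hi, decide_true, Bool.true_and]
      cases f i <;> cases f' i <;> simp
    rw [← hpre, ← Measure.map_apply (measurable_xorWith g) (measurableSet_boolCylinder _ _),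
      hν g hg]
  refine (measure_ext_of_boolCylinder fun s f => ?_).symm
  have hsum : ν univ = 2 ^ s.card * ν (boolCylinder s f) := by
    calc ν univ = ∑ v : s → Bool, ν (s.restrict ⁻¹' {v}) := by
          rw [sum_measure_preimage_singleton _ fun _ _ =>
            (measurableSet_singleton _).preimage (by fun_prop)]
          simp
      _ = ∑ v : s → Bool, ν (boolCylinder s f) := Finset.sum_congr rfl fun v _ => by
          obtain ⟨f', rfl⟩ := s.restrict_surjective (α := fun _ => Bool) v
          rw [← boolCylinder_eq_restrict_preimage, hconst]
      _ = 2 ^ s.card * ν (boolCylinder s f) := by simp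
  rw [Measure.smul_apply, hμ.measure_boolCylinder, smul_eq_mul, hsum, mul_right_comm,
    ← mul_pow, ENNReal.mul_inv_cancel two_ne_zero ENNReal.ofNat_ne_top, one_pow, one_mul]

lemma IsBernoulli.measure_eq_zero_or_one (hμ : IsBernoulli μ fun _ => 1 / 2) {A : Set (ι → Bool)}
    (hA : NullMeasurableSet A μ)
    (hinv : ∀ g : ι → Bool, {i | g i = true}.Finite → xorWith g ⁻¹' A = A) :
    μ A = 0 ∨ μ A = 1 := by
  have := hμ.1
  set B := toMeasurable μ A
  have hB : MeasurableSet B := measurableSet_toMeasurable μ A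
  have hBA : B =ᵐ[μ] A := hA.toMeasurable_ae_eq
  have hsmul : μ.restrict B = μ B • μ := by
    refine (hμ.eq_smul_of_map_xorWith fun g hg => ?_).trans (by rw [Measure.restrict_apply_univ])
    have hpre : xorWith g ⁻¹' B =ᵐ[μ] B := by
      have := (hμ.measurePreserving_xorWith g).quasiMeasurePreserving.preimage_ae_eq hBA
      rw [hinv g hg] at this
      exact this.trans hBA.symm
    calc (μ.restrict B).map (xorWith g)
        = (μ.restrict (xorWith g ⁻¹' B)).map (xorWith g) := by
          rw [Measure.restrict_congr_set hpre]
      _ = μ.restrict B := ((hμ.measurePreserving_xorWith g).restrict_preimage hB).map_eq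
  have hsq : μ B * μ B = μ B := by
    simpa [Measure.restrict_apply hB] using (congrArg (· B) hsmul).symm
  rw [← measure_toMeasurable A, or_iff_not_imp_left]
  exact fun h0 => (ENNReal.mul_eq_left h0 (measure_ne_top μ B)).1 hsq

lemma IsBernoulli.measure_setBits_preimage_le (hμ : IsBernoulli μ fun _ => 1 / 2) (T : Finset ι)
    {W : Set (ι → Bool)} (hW : MeasurableSet W) : μ (setBits T ⁻¹' W) ≤ 2 ^ T.card * μ W := by
  classical
  have hsub :
      setBits T ⁻¹' W ⊆ ⋃ s ∈ T.powerset, xorWith (fun i => decide (i ∈ s)) ⁻¹' W := by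
    intro x hx
    refine mem_biUnion (x := T.filter fun i => x i = false)
      (Finset.mem_powerset.2 (Finset.filter_subset _ _)) ?_
    -- setting the bits of `T` flips exactly those bits of `T` that are `false` in `x`
    have hx' :
        xorWith (fun i => decide (i ∈ T.filter fun i => x i = false)) x = setBits T x := by
      funext i
      by_cases hi : i ∈ T <;> cases hxi : x i <;> simp [setBits, xorWith, hi, hxi]
    rwa [mem_preimage, hx']
  calc μ (setBits T ⁻¹' W)
      ≤ ∑ s ∈ T.powerset, μ (xorWith (fun i => decide (i ∈ s)) ⁻¹' W) :=
        (measure_mono hsub).trans (measure_biUnion_finset_le _ _)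
    _ = 2 ^ T.card * μ W := by
        simp [(hμ.measurePreserving_xorWith _).measure_preimage hW.nullMeasurableSet]

lemma IsBernoulli.measure_setBits_preimage_le_of_dependsOn (hμ : IsBernoulli μ fun _ => 1 / 2)
    {s : Set ι} (hs : s.Finite) {W : Set (ι → Bool)}
    (hW : DependsOn (· ∈ W) s) (X : Set ι) :
    μ (setBits X ⁻¹' W) ≤ 2 ^ (X ∩ s).ncard * μ W := by
  have hfin : (X ∩ s).Finite := hs.inter_of_right X
  rw [setBits_preimage_eq_of_dependsOn hW, ← hfin.coe_toFinset, Set.ncard_coe_finset]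
  exact hμ.measure_setBits_preimage_le _ (measurableSet_of_dependsOn hs hW)

end Uniform

lemma xorWith_preimage_filterSet {F : Filter ℕ} (hF : F ≤ cofinite) {g : ℕ → Bool}
    (hg : {i | g i = true}.Finite) : xorWith g ⁻¹' filterSet F = filterSet F := by
  ext x
  refine Filter.congr_sets (hF (mem_cofinite.2 (hg.subset fun n hn => ?_)))
  by_contra hgn
  simp_all [xorWith]

lemma disjoint_filterSet_preimage_xorWith_true (F : Filter ℕ) [F.NeBot] :
    Disjoint (filterSet F) (xorWith (fun _ => true) ⁻¹' filterSet F) := by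
  refine Set.disjoint_left.2 fun x hx hx' => F.empty_notMem ?_
  refine mem_of_superset (F.inter_mem hx hx') ?_
  rintro n ⟨h, h'⟩
  simp_all [xorWith]

lemma IsBernoulli.measure_filterSet_eq_zero {μ : Measure (ℕ → Bool)}
    (hμ : IsBernoulli μ fun _ => 1 / 2) {F : Filter ℕ} [F.NeBot] (hF : F ≤ cofinite)
    (hA : NullMeasurableSet (filterSet F) μ) : μ (filterSet F) = 0 := by
  refine (hμ.measure_eq_zero_or_one hA fun g hg =>
    xorWith_preimage_filterSet hF hg).resolve_right fun h1 => ?_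
  have := hμ.1
  have hT := hμ.measurePreserving_xorWith fun _ => true
  have h2 : μ (filterSet F ∪ xorWith (fun _ => true) ⁻¹' filterSet F) = 2 := by
    rw [measure_union₀ (hA.preimage hT.quasiMeasurePreserving)
      (disjoint_filterSet_preimage_xorWith_true F).aedisjoint, hT.measure_preimage hA, h1]
    norm_num
  exact absurd (h2 ▸ prob_le_one) (by norm_num)

lemma exists_dependsOn_cover {μ : Measure (ℕ → Bool)} [IsFiniteMeasure μ]
    {A : Set (ℕ → Bool)} {ε : ℝ≥0∞} (hA : μ A < ε) :
    ∃ W : ℕ → Set (ℕ → Bool), (∀ n, DependsOn (· ∈ W n) (Iio n)) ∧ A ⊆ ⋃ n, W n ∧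
      ∑' n, μ (W n) < ε := by
  obtain ⟨U, hAU, hU, hUε⟩ := A.exists_isOpen_lt_of_lt ε hA
  let R : ℕ → Set (ℕ → Bool) := fun n => {x | PiNat.cylinder x n ⊆ U}
  have hRdep : ∀ n, DependsOn (· ∈ R n) (Iio n) := fun n x y hxy => by
    simp only [R, mem_ofPred_eq,
      PiNat.mem_cylinder_iff_eq.1 (PiNat.mem_cylinder_iff.2 fun i hi => (hxy i hi).symm)]
  have hRmono : Monotone R := fun m n hmn x hx => (PiNat.cylinder_anti x hmn).trans hx
  have hRU : ⋃ n, R n = U := by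
    refine (iUnion_subset fun n x (hx : x ∈ R n) => hx (PiNat.self_mem_cylinder x n)).antisymm
      fun x hx => ?_
    obtain ⟨_, ⟨y, n, rfl⟩, hxy, hyU⟩ :=
      (PiNat.isTopologicalBasis_cylinders _).exists_subset_of_mem_open hx hU
    refine mem_iUnion.2 ⟨n, show PiNat.cylinder x n ⊆ U from ?_⟩
    rwa [PiNat.mem_cylinder_iff_eq.1 hxy]
  have hWdep : ∀ n, DependsOn (· ∈ disjointed R n) (Iio n) := by
    rintro (_ | n)
    · simpa using hRdep 0
    · rw [← Order.succ_eq_add_one, hRmono.disjointed_succ (not_isMax n)]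
      intro x y hxy
      have h₁ : (x ∈ R (Order.succ n)) = (y ∈ R (Order.succ n)) := hRdep _ hxy
      have h₀ : (x ∈ R n) = (y ∈ R n) := hRdep n fun i hi => hxy i (Nat.lt_succ_of_lt hi)
      simp only [Set.mem_sdiff, h₁, h₀]
  refine ⟨disjointed R, hWdep, iUnion_disjointed (f := R) ▸ hRU ▸ hAU, ?_⟩
  rwa [← measure_iUnion (disjoint_disjointed R)
    fun n => measurableSet_of_dependsOn (finite_Iio n) (hWdep n), iUnion_disjointed, hRU]

lemma tsum_ite_lt_eq_tsum_nat_add (c : ℕ → ℝ≥0∞) (N : ℕ) :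
    ∑' n, (if N < n then c n else 0) = ∑' k, c (k + (N + 1)) := by
  rw [← ENNReal.summable.sum_add_tsum_nat_add' (k := N + 1),
    Finset.sum_eq_zero fun n hn => if_neg (by simp at hn; omega), zero_add]
  exact tsum_congr fun k => if_pos (by omega)

lemma tendsto_tsum_ite_lt (c : ℕ → ℝ≥0∞) (hc : ∑' n, c n ≠ ∞) :
    Tendsto (fun N => ∑' n, if N < n then c n else 0) atTop (𝓝 0) := by
  simp_rw [tsum_ite_lt_eq_tsum_nat_add]
  exact (ENNReal.tendsto_sum_nat_add c hc).comp (tendsto_add_atTop_nat 1)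

lemma two_pow_le_one_add_tsum {f m : ℕ → ℕ} (hm : Monotone m) (hmf : ∀ k, m (f k) ≤ k)
    (n : ℕ) : (2 : ℝ≥0∞) ^ m n ≤ 1 + ∑' k, if f k < n then 2 ^ (k + 1) else 0 := by
  rcases h : m n with _ | k
  · simp
  · have hk : f k < n := by
      by_contra! hn
      have := (hm hn).trans (hmf k)
      omega
    calc (2 : ℝ≥0∞) ^ (k + 1) = if f k < n then 2 ^ (k + 1) else 0 := (if_pos hk).symm
      _ ≤ ∑' k, if f k < n then 2 ^ (k + 1) else 0 := ENNReal.le_tsum k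
      _ ≤ _ := le_add_self

lemma exists_strictMono_tsum_two_pow_mul_le (c : ℕ → ℝ≥0∞) (hc : ∑' n, c n ≠ ∞) {ε : ℝ≥0∞}
    (hε : ε ≠ 0) :
    ∃ f : ℕ → ℕ, StrictMono f ∧ ∀ m : ℕ → ℕ, Monotone m → (∀ k, m (f k) ≤ k) →
      ∑' n, 2 ^ m n * c n ≤ ∑' n, c n + ε := by
  -- the tail beyond `f k` is below `ε * r k * r k`: one factor `r k` cancels the weight
  -- `2 ^ (k + 1)`, and the other makes the bounds summable to `ε`
  let r : ℕ → ℝ≥0∞ := fun k => 2⁻¹ ^ (k + 1)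
  have hr : ∀ k, 2 ^ (k + 1) * r k = 1 := fun k => by
    rw [← mul_pow, ENNReal.mul_inv_cancel two_ne_zero ENNReal.ofNat_ne_top, one_pow]
  have hδ : ∀ k, 0 < ε * r k * r k := fun k => by simp [r, pos_iff_ne_zero, hε]
  obtain ⟨f, hf, hfδ⟩ := extraction_forall_of_eventually fun k =>
    (tendsto_tsum_ite_lt c hc).eventually (gt_mem_nhds (hδ k))
  refine ⟨f, hf, fun m hm hmf => ?_⟩
  calc ∑' n, 2 ^ m n * c n
      ≤ ∑' n, (1 + ∑' k, if f k < n then 2 ^ (k + 1) else 0) * c n :=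
        ENNReal.tsum_le_tsum fun n => by gcongr; exact two_pow_le_one_add_tsum hm hmf n
    _ = ∑' n, c n + ∑' k, 2 ^ (k + 1) * ∑' n, if f k < n then c n else 0 := by
        simp_rw [add_mul, one_mul, ← ENNReal.tsum_mul_right, ← ENNReal.tsum_mul_left, ite_mul,
          mul_ite, zero_mul, mul_zero]
        rw [ENNReal.tsum_add, ENNReal.tsum_comm]
    _ ≤ ∑' n, c n + ∑' k, 2 ^ (k + 1) * (ε * r k * r k) := by
        gcongr with k
        exact (hfδ k).le
    _ = ∑' n, c n + ε := by
        simp_rw [mul_comm (ε * r _), ← mul_assoc, hr, one_mul, ENNReal.tsum_mul_left, r,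
          ENNReal.tsum_geometric_add_one, ENNReal.one_sub_inv_two, inv_inv,
          ENNReal.inv_mul_cancel two_ne_zero ENNReal.ofNat_ne_top, mul_one]

theorem rapid_filter_nonmeasurable (μ : Measure (ℕ → Bool))
    (hμ : IsBernoulli μ fun _ => 1 / 2)
    (F : Filter ℕ) [F.NeBot] (hF : F ≤ Filter.cofinite)
    (hrapid : ∀ f : ℕ → ℕ, StrictMono f →
      ∃ X ∈ F, ∀ n, (X ∩ Set.Iio (f n)).ncard ≤ n) :
    ¬ NullMeasurableSet (filterSet F) μ := by
  intro hA
  have := hμ.1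
  obtain ⟨W, hWdep, hAW, hWsum⟩ := exists_dependsOn_cover (ε := 2⁻¹)
    (by simp [hμ.measure_filterSet_eq_zero hF hA] : μ (filterSet F) < 2⁻¹)
  obtain ⟨f, hf, hfW⟩ := exists_strictMono_tsum_two_pow_mul_le (fun n => μ (W n))
    hWsum.ne_top (ε := 2⁻¹) (by simp)
  obtain ⟨X, hXF, hXf⟩ := hrapid f hf
  have hsetBits : setBits X ⁻¹' filterSet F = univ :=
    eq_univ_of_forall fun x => mem_of_superset hXF fun n hn => by simp [setBits, hn]
  have hmono : Monotone fun n => (X ∩ Iio n).ncard := fun m n hmn =>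
    ncard_le_ncard (inter_subset_inter_right X (Iio_subset_Iio hmn))
      ((finite_Iio n).inter_of_right X)
  have : (1 : ℝ≥0∞) < 1 :=
    calc 1 = μ (setBits X ⁻¹' filterSet F) := by rw [hsetBits, measure_univ]
      _ ≤ ∑' n, μ (setBits X ⁻¹' W n) :=
        (measure_mono (preimage_iUnion ▸ preimage_mono hAW)).trans (measure_iUnion_le _)
      _ ≤ ∑' n, 2 ^ (X ∩ Iio n).ncard * μ (W n) := ENNReal.tsum_le_tsum fun n =>
        hμ.measure_setBits_preimage_le_of_dependsOn (finite_Iio n) (hWdep n) X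
      _ ≤ ∑' n, μ (W n) + 2⁻¹ := hfW _ hmono hXf
      _ < 2⁻¹ + 2⁻¹ := by gcongr; simp
      _ = 1 := ENNReal.inv_two_add_inv_two
  exact lt_irrefl _ this
end

section
/- Let I be a finite set of size 2n, let Z(I) be the set of subsets of I of size n equipped with the uniform (counting) probability measure λ_I, and let C ⊆ I. Then λ_I({I' ∈ Z(I) : C ⊆ I'}) ≤ 2^{-|C|}. -/
open MeasureTheory Filter Set
open scoped ENNReal

private lemma key_choose (n : ℕ) : ∀ c ≤ n, 2 ^ c * (2 * n - c).choose (n - c) ≤ (2 * n).choose n := by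
  intro c
  induction c with
  | zero => simp
  | succ c ih =>
    intro hc
    have hcn : c ≤ n := Nat.le_of_succ_le hc
    refine le_trans ?_ (ih hcn)
    rw [pow_succ, mul_assoc]
    refine Nat.mul_le_mul_left _ ?_
    set m : ℕ := 2 * n - (c + 1)
    set k : ℕ := n - (c + 1)
    have hm : 2 * n - c = m + 1 := by omega
    have hk : n - c = k + 1 := by omega
    rw [hm, hk]
    have h1 : (m + 1) * m.choose k = (m + 1).choose (k + 1) * (k + 1) :=
      Nat.add_one_mul_choose_eq m k
    have hmk : 2 * (k + 1) ≤ m + 1 := by omega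
    have h2 : 2 * (k + 1) * m.choose k ≤ (m + 1) * m.choose k :=
      Nat.mul_le_mul_right _ hmk
    rw [h1] at h2
    exact Nat.le_of_mul_le_mul_right (by
      calc 2 * m.choose k * (k + 1) = 2 * (k + 1) * m.choose k := by ring
        _ ≤ (m + 1).choose (k + 1) * (k + 1) := h2) (Nat.succ_pos k)

private lemma count_contain {α : Type*} [DecidableEq α] (n : ℕ) (I : Finset α)
    (hI : I.card = 2 * n) (C : Finset α) (hC : C ⊆ I) (hcn : C.card ≤ n) :
    ((I.powersetCard n).filter fun I' => C ⊆ I').card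
      = (2 * n - C.card).choose (n - C.card) := by
  have hIC : (I \ C).card = 2 * n - C.card := by
    rw [Finset.card_sdiff_of_subset hC, hI]
  rw [← hIC, ← Finset.card_powersetCard]
  apply Finset.card_bij (fun I' _ => I' \ C)
  · intro I' hI'
    simp only [Finset.mem_filter, Finset.mem_powersetCard] at hI' ⊢
    obtain ⟨⟨hsub, hcard⟩, hCs⟩ := hI'
    refine ⟨Finset.sdiff_subset_sdiff hsub le_rfl, ?_⟩
    rw [Finset.card_sdiff_of_subset hCs, hcard]
  · intro a ha b hb hab
    simp only [Finset.mem_filter, Finset.mem_powersetCard] at ha hb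
    have : a \ C ∪ C = b \ C ∪ C := by rw [hab]
    rwa [Finset.sdiff_union_of_subset ha.2, Finset.sdiff_union_of_subset hb.2] at this
  · intro J hJ
    simp only [Finset.mem_powersetCard] at hJ
    refine ⟨J ∪ C, ?_, ?_⟩
    · simp only [Finset.mem_filter, Finset.mem_powersetCard]
      have hdisj : Disjoint J C := Finset.disjoint_of_subset_left hJ.1 Finset.sdiff_disjoint
      refine ⟨⟨Finset.union_subset (hJ.1.trans Finset.sdiff_subset) hC, ?_⟩,
        Finset.subset_union_right⟩
      rw [Finset.card_union_of_disjoint hdisj, hJ.2]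
      omega
    · have hdisj : Disjoint J C := Finset.disjoint_of_subset_left hJ.1 Finset.sdiff_disjoint
      rw [Finset.union_sdiff_right, Finset.sdiff_eq_self_of_disjoint hdisj]

theorem half_subsets_contain (α : Type*) [DecidableEq α] (n : ℕ) (I : Finset α)
    (hI : I.card = 2 * n) (C : Finset α) (hC : C ⊆ I) :
    ((((I.powersetCard n).filter fun I' => C ⊆ I').card : ℝ) /
        ((I.powersetCard n).card : ℝ)) ≤ (1 / 2) ^ C.card := by
  have hden : (I.powersetCard n).card = (2 * n).choose n := by
    rw [Finset.card_powersetCard, hI]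
  have hdpos : (0 : ℝ) < ((I.powersetCard n).card : ℝ) := by
    rw [hden]
    exact_mod_cast Nat.choose_pos (by omega)
  by_cases hcn : C.card ≤ n
  · rw [div_le_iff₀ hdpos, count_contain n I hI C hC hcn, hden]
    have := key_choose n C.card hcn
    have h2 : ((2:ℝ) ^ C.card) * ((2 * n - C.card).choose (n - C.card) : ℝ)
        ≤ ((2 * n).choose n : ℝ) := by exact_mod_cast this
    rw [one_div, inv_pow, inv_mul_eq_div, le_div_iff₀ (by positivity : (0:ℝ) < 2 ^ C.card),
      mul_comm]
    exact h2
  · have : ((I.powersetCard n).filter fun I' => C ⊆ I') = ∅ := by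
      rw [Finset.filter_eq_empty_iff]
      intro I' hI' hCI'
      rw [Finset.mem_powersetCard] at hI'
      exact hcn (hI'.2 ▸ Finset.card_le_card hCI')
    rw [this]
    simp
end
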